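/- arXiv:1312.6979 — 5 statements merged into one kernel-verified Lean document; each statement's English description precedes it below -/
import Mathlib

section
/- There exists a constant C < ∞ such that for every ε with 0 < ε ≤ 1/3, every α ∈ I, and every p₃ ∈ [0,1), one has ∫_{[0,1)²} 1/|e₂D(p) − (α − 3 + cos(2πp₃)) − iε| dp ≤ C·|log ε|². -/
open MeasureTheory Real

/-- The two-dimensional dispersion `e₂D(p) = -cos(2πp₁) - cos(2πp₂)`. -/
noncomputable def disp2D (p : Fin 2 → ℝ) : ℝ := -∑ i, Real.cos (2 * Real.pi * p i)

/-- The boundary of the rectangle in `ℂ` with vertices `-1, 7, 7-i, -1-i`. -/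
def RectI : Set ℂ := {α | -1 ≤ α.re ∧ α.re ≤ 7 ∧ -1 ≤ α.im ∧ α.im ≤ 0 ∧
  (α.re = -1 ∨ α.re = 7 ∨ α.im = -1 ∨ α.im = 0)}

/-- The fundamental domain `[0,1)²` of the two-dimensional torus. -/
def box2 : Set (Fin 2 → ℝ) := Set.univ.pi fun _ => Set.Ico (0 : ℝ) 1

/-!
On `RectI` either the real or the imaginary part of `e₂D(p) - (α - 3 + cos 2πp₃) - iε` has size
at least `ε`, so the integrand is at most `2 / (ε + |e₂D(p) - λ|)` with `λ` real. Integrating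
first in `p₂` leads to `∫₀¹ dy / (ε + |cos 2πy - c|)`. Around the point `m` with `cos 2πm = c`
the cosine moves away from `c` linearly, with slope comparable to the distance `d` of `m` to the
critical points `0, 1/2`, and at least quadratically; comparing with the profiles
`1 / (ε + d|u|)` and `1 / (ε + u²)` bounds the integral by `(1 + |log ε|) / √(ε + |1 - |c||)`.
For `c = -λ - cos 2πp₁` this square-root singularity is integrable in `p₁` at the price of one
more logarithm, by the same comparison with the quadratic profile.
-/

open Set

lemma two_div_pi_mul_min_le_sin {s : ℝ} (h0 : 0 ≤ s) (h1 : s ≤ π) :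
    2 / π * min s (π - s) ≤ sin s := by
  rcases le_total s (π / 2) with h | h
  · exact (mul_le_mul_of_nonneg_left (min_le_left _ _) (by positivity)).trans
      (Real.mul_le_sin h0 h)
  · rw [← Real.sin_pi_sub]
    exact (mul_le_mul_of_nonneg_left (min_le_right _ _) (by positivity)).trans
      (Real.mul_le_sin (by linarith) (by linarith))

lemma two_div_pi_mul_abs_le_abs_sin {x : ℝ} (hx : |x| ≤ π / 2) : 2 / π * |x| ≤ |sin x| := by
  rcases le_total 0 x with h | h
  · rw [abs_of_nonneg h] at hx ⊢
    exact (Real.mul_le_sin h hx).trans (le_abs_self _)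
  · rw [abs_of_nonpos h] at hx ⊢
    exact (Real.mul_le_sin (by linarith) hx).trans (by rw [Real.sin_neg]; exact neg_le_abs _)

/-- Away from the critical points `0, 1/2` of `cos (2π ·)` the separation grows linearly, with
slope proportional to the distance of `m` to them; near them it grows quadratically. -/
lemma abs_cos_two_pi_sub_cos_two_pi_ge {y m : ℝ} (hy : y ∈ Icc (0 : ℝ) (1 / 2))
    (hm : m ∈ Icc (0 : ℝ) (1 / 2)) :
    8 * (|y - m| * max |y - m| (min m (1 / 2 - m))) ≤ |cos (2 * π * y) - cos (2 * π * m)| := by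
  obtain ⟨hy0, hy1⟩ := hy
  obtain ⟨hm0, hm1⟩ := hm
  have hπ := Real.pi_pos
  have hsum : 2 * max |y - m| (min m (1 / 2 - m)) ≤ sin (π * (y + m)) := by
    have hmax : max |y - m| (min m (1 / 2 - m)) ≤ min (y + m) (1 - (y + m)) := by
      refine max_le (le_min ?_ ?_) (le_min ?_ ?_)
      · rw [abs_le]; constructor <;> linarith
      · rw [abs_le]; constructor <;> linarith
      · linarith [min_le_left m (1 / 2 - m)]
      · linarith [min_le_right m (1 / 2 - m)]
    have h := two_div_pi_mul_min_le_sin (s := π * (y + m)) (by positivity) (by nlinarith)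
    rw [show π - π * (y + m) = π * (1 - (y + m)) by ring, ← mul_min_of_nonneg _ _ hπ.le] at h
    calc 2 * max |y - m| (min m (1 / 2 - m)) ≤ 2 * min (y + m) (1 - (y + m)) := by linarith
      _ = 2 / π * (π * min (y + m) (1 - (y + m))) := by field_simp
      _ ≤ _ := h
  have hdiff : 2 * |y - m| ≤ |sin (π * (y - m))| := by
    have hym : |y - m| ≤ 1 / 2 := abs_le.2 ⟨by linarith, by linarith⟩
    have h := two_div_pi_mul_abs_le_abs_sin (x := π * (y - m))
      (by rw [abs_mul, abs_of_pos hπ]; nlinarith)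
    rwa [abs_mul, abs_of_pos hπ, ← mul_assoc, div_mul_cancel₀ _ hπ.ne'] at h
  have hsin : 0 ≤ sin (π * (y + m)) := hsum.trans' (by positivity)
  rw [Real.cos_sub_cos, show (2 * π * y + 2 * π * m) / 2 = π * (y + m) by ring,
    show (2 * π * y - 2 * π * m) / 2 = π * (y - m) by ring, abs_mul, abs_mul, abs_of_nonneg hsin]
  calc 8 * (|y - m| * max |y - m| (min m (1 / 2 - m)))
      = |(-2 : ℝ)| * (2 * max |y - m| (min m (1 / 2 - m))) * (2 * |y - m|) := by norm_num; ring
    _ ≤ _ := by gcongr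

lemma abs_sub_clamp_add_le {t : ℝ} (ht : t ∈ Icc (-1 : ℝ) 1) (c : ℝ) :
    |t - max (-1) (min 1 c)| + (max |c| 1 - 1) ≤ |t - c| := by
  obtain ⟨ht0, ht1⟩ := ht
  rcases le_total c (-1) with h | h
  · rw [min_eq_right (by linarith), max_eq_left h, abs_of_nonpos (by linarith : c ≤ 0),
      max_eq_left (by linarith), abs_of_nonneg (show (0 : ℝ) ≤ t - -1 by linarith),
      abs_of_nonneg (show (0 : ℝ) ≤ t - c by linarith)]
    linarith
  rcases le_total c 1 with h' | h'
  · rw [min_eq_right h', max_eq_right h, max_eq_right (abs_le.2 ⟨h, h'⟩)]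
    simp
  · rw [min_eq_left h', max_eq_right (by norm_num), abs_of_nonneg (by linarith : 0 ≤ c),
      max_eq_left h', abs_of_nonpos (show t - 1 ≤ 0 by linarith),
      abs_of_nonpos (show t - c ≤ 0 by linarith)]
    linarith

lemma exists_abs_cos_two_pi_sub_ge (c : ℝ) :
    ∃ m ∈ Icc (0 : ℝ) (1 / 2), cos (2 * π * m) = max (-1) (min 1 c) ∧
      ∀ y ∈ Icc (0 : ℝ) (1 / 2), 8 * (|y - m| * max |y - m| (min m (1 / 2 - m))) + (max |c| 1 - 1)
        ≤ |cos (2 * π * y) - c| := by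
  set c' := max (-1) (min 1 c)
  have hc' : c' ∈ Icc (-1 : ℝ) 1 := ⟨le_max_left _ _, max_le (by norm_num) (min_le_left _ _)⟩
  have hπ := Real.pi_pos
  set m := arccos c' / (2 * π)
  have hm : m ∈ Icc (0 : ℝ) (1 / 2) := by
    refine ⟨div_nonneg (arccos_nonneg c') (by positivity), ?_⟩
    rw [div_le_iff₀ (by positivity)]
    linarith [Real.arccos_le_pi c']
  have hcos : cos (2 * π * m) = c' := by
    rw [mul_div_cancel₀ _ (by positivity), Real.cos_arccos hc'.1 hc'.2]
  refine ⟨m, hm, hcos, fun y hy => ?_⟩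
  have h := abs_cos_two_pi_sub_cos_two_pi_ge hy hm
  rw [hcos] at h
  linarith [abs_sub_clamp_add_le ⟨neg_one_le_cos (2 * π * y), cos_le_one (2 * π * y)⟩ c]

lemma one_sub_abs_cos_two_pi_le {m : ℝ} (hm : m ∈ Icc (0 : ℝ) (1 / 2)) :
    1 - |cos (2 * π * m)| ≤ 20 * min m (1 / 2 - m) ^ 2 := by
  obtain ⟨hm0, hm1⟩ := hm
  have hπ2 : π ^ 2 ≤ 10 := by nlinarith [Real.pi_lt_d2, Real.pi_pos]
  have h0 := Real.one_sub_sq_div_two_le_cos (x := 2 * π * m)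
  have h1 := Real.one_sub_sq_div_two_le_cos (x := π - 2 * π * m)
  rw [Real.cos_pi_sub] at h1
  rcases min_cases m (1 / 2 - m) with ⟨hmin, -⟩ | ⟨hmin, -⟩ <;> rw [hmin] <;>
    nlinarith [le_abs_self (cos (2 * π * m)), neg_abs_le (cos (2 * π * m)), hm0, hm1]

lemma integral_one_div_add_abs {r a : ℝ} (hr : 0 < r) (ha : 0 ≤ a) :
    ∫ u in -a..a, 1 / (r + |u|) = 2 * log (1 + a / r) := by
  have hint : ∀ b c : ℝ, IntervalIntegrable (fun u => 1 / (r + |u|)) volume b c := fun b c =>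
    (continuous_const.div (by fun_prop) fun u => by positivity).intervalIntegrable b c
  have hpos : ∫ u in (0 : ℝ)..a, 1 / (r + |u|) = log (1 + a / r) := by
    calc ∫ u in (0 : ℝ)..a, 1 / (r + |u|) = ∫ u in (0 : ℝ)..a, (r + u)⁻¹ :=
          intervalIntegral.integral_congr fun u hu => by
            rw [uIcc_of_le ha] at hu
            simp [abs_of_nonneg hu.1]
      _ = ∫ v in r..r + a, v⁻¹ := by
          rw [intervalIntegral.integral_comp_add_left (fun v => v⁻¹) r, add_zero]
      _ = log (1 + a / r) := by
          rw [integral_inv_of_pos hr (by positivity)]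
          congr 1
          field_simp
  have hneg : ∫ u in -a..0, 1 / (r + |u|) = log (1 + a / r) := by
    have h := intervalIntegral.integral_comp_neg (a := 0) (b := a) fun u => 1 / (r + |u|)
    simp only [abs_neg, neg_zero] at h
    rw [← h, hpos]
  rw [← intervalIntegral.integral_add_adjacent_intervals (hint _ _) (hint _ _), hneg, hpos]
  ring

lemma integral_one_div_add_mul_sq_le {M k : ℝ} (hM : 0 < M) (hk : 0 < k) (a b : ℝ) :
    ∫ u in a..b, 1 / (M + k * u ^ 2) ≤ π / √(k * M) := by
  set s := √(M / k)
  have hs : 0 < s := Real.sqrt_pos.2 (by positivity)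
  have hs2 : s ^ 2 = M / k := Real.sq_sqrt (by positivity)
  have hsM : s / M = 1 / √(k * M) := by
    have hMM := Real.mul_self_sqrt hM.le
    have hsqrtM : 0 < √M := Real.sqrt_pos.2 hM
    rw [show s = √M / √k from Real.sqrt_div hM.le k, Real.sqrt_mul hk.le]
    field_simp
    linarith
  have hrw : ∀ u, 1 / (M + k * u ^ 2) = M⁻¹ * (1 / (1 + (u / s) ^ 2)) := fun u => by
    rw [div_pow, hs2]
    field_simp
  simp_rw [hrw]
  rw [intervalIntegral.integral_const_mul,
    intervalIntegral.integral_comp_div (fun v => 1 / (1 + v ^ 2)) hs.ne',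
    integral_one_div_one_add_sq]
  have harctan : arctan (b / s) - arctan (a / s) ≤ π := by
    linarith [arctan_lt_pi_div_two (b / s), neg_pi_div_two_lt_arctan (a / s)]
  calc M⁻¹ * (s • (arctan (b / s) - arctan (a / s))) ≤ M⁻¹ * (s * π) := by
        rw [smul_eq_mul]; gcongr
    _ = π * (s / M) := by ring
    _ = π / √(k * M) := by rw [hsM]; ring

lemma log_one_add_div_le {K ε : ℝ} (hK : 0 ≤ K) (hε : 0 < ε) :
    log (1 + K / ε) ≤ log (1 + K) + |log ε| := by
  rcases le_total ε 1 with h | h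
  · calc log (1 + K / ε) ≤ log ((1 + K) / ε) :=
          log_le_log (by positivity) (by rw [add_div]; gcongr; exact one_le_one_div hε h)
      _ = log (1 + K) + |log ε| := by
          rw [log_div (by positivity) hε.ne', abs_of_nonpos (log_nonpos hε.le h)]; ring
  · calc log (1 + K / ε) ≤ log (1 + K) :=
          log_le_log (by positivity) (by gcongr; exact div_le_self hK h)
      _ ≤ log (1 + K) + |log ε| := le_add_of_nonneg_right (abs_nonneg _)

lemma integral_comp_cos_two_pi_eq {g : ℝ → ℝ} (hg : Continuous g) :
    ∫ y in (0 : ℝ)..1, g (cos (2 * π * y)) = 2 * ∫ y in (0 : ℝ)..1 / 2, g (cos (2 * π * y)) := by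
  have hint : ∀ a b : ℝ, IntervalIntegrable (fun y => g (cos (2 * π * y))) volume a b :=
    fun a b => (by fun_prop : Continuous fun y => g (cos (2 * π * y))).intervalIntegrable a b
  have hreflect : ∫ y in (1 / 2 : ℝ)..1, g (cos (2 * π * y)) =
      ∫ y in (0 : ℝ)..1 / 2, g (cos (2 * π * y)) := by
    have h := intervalIntegral.integral_comp_sub_left (fun y => g (cos (2 * π * y))) (1 : ℝ)
      (a := 0) (b := 1 / 2)
    norm_num only [mul_sub, mul_one, cos_two_pi_sub] at h
    exact h.symm
  rw [← intervalIntegral.integral_add_adjacent_intervals (hint 0 (1 / 2)) (hint (1 / 2) 1),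
    hreflect]
  ring

lemma integral_comp_cos_two_pi_le {g φ : ℝ → ℝ} (hg : Continuous g) (hφ : Continuous φ)
    (hφ0 : ∀ u, 0 ≤ φ u) {m : ℝ} (hm : m ∈ Icc (0 : ℝ) (1 / 2))
    (hle : ∀ y ∈ Icc (0 : ℝ) (1 / 2), g (cos (2 * π * y)) ≤ φ (y - m)) :
    ∫ y in (0 : ℝ)..1, g (cos (2 * π * y)) ≤ 2 * ∫ u in -(1 / 2 : ℝ)..1 / 2, φ u := by
  rw [integral_comp_cos_two_pi_eq hg]
  gcongr
  calc ∫ y in (0 : ℝ)..1 / 2, g (cos (2 * π * y)) ≤ ∫ y in (0 : ℝ)..1 / 2, φ (y - m) :=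
        intervalIntegral.integral_mono_on (by norm_num)
          ((by fun_prop : Continuous fun y => g (cos (2 * π * y))).intervalIntegrable _ _)
          ((by fun_prop : Continuous fun y => φ (y - m)).intervalIntegrable _ _) hle
    _ = ∫ u in -m..1 / 2 - m, φ u := by rw [intervalIntegral.integral_comp_sub_right, zero_sub]
    _ ≤ ∫ u in -(1 / 2 : ℝ)..1 / 2, φ u :=
        intervalIntegral.integral_mono_interval (by linarith [hm.2]) (by linarith [hm.2])
          (by linarith [hm.1]) (Filter.Eventually.of_forall hφ0) (hφ.intervalIntegrable _ _)

lemma integral_one_div_sqrt_add_abs_cos_sub_le {ε : ℝ} (hε : 0 < ε) (c : ℝ) :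
    ∫ y in (0 : ℝ)..1, 1 / √(ε + |cos (2 * π * y) - c|) ≤ 4 * (1 + |log ε|) := by
  obtain ⟨m, hm, -, hkey⟩ := exists_abs_cos_two_pi_sub_ge c
  have hsε : 0 < √ε := Real.sqrt_pos.2 hε
  have hle : ∀ y ∈ Icc (0 : ℝ) (1 / 2),
      1 / √(ε + |cos (2 * π * y) - c|) ≤ 1 / (√ε / 2 + |y - m|) := by
    intro y hy
    have hsq : 8 * (y - m) ^ 2 ≤ |cos (2 * π * y) - c| := by
      nlinarith [hkey y hy, le_max_left |y - m| (min m (1 / 2 - m)), abs_nonneg (y - m),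
        sq_abs (y - m), le_max_right |c| 1]
    gcongr
    rw [Real.le_sqrt (by positivity) (by positivity)]
    nlinarith [Real.sq_sqrt hε.le, sq_abs (y - m), sq_nonneg (√ε - 2 * |y - m|)]
  calc ∫ y in (0 : ℝ)..1, 1 / √(ε + |cos (2 * π * y) - c|)
      ≤ 2 * ∫ u in -(1 / 2 : ℝ)..1 / 2, 1 / (√ε / 2 + |u|) :=
        integral_comp_cos_two_pi_le (g := fun t => 1 / √(ε + |t - c|))
          (continuous_const.div (by fun_prop) fun t => (Real.sqrt_pos.2 (by positivity)).ne')
          (continuous_const.div (by fun_prop) fun u => by positivity)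
          (fun u => by positivity) hm hle
    _ = 4 * log (1 + 1 / √ε) := by
        rw [integral_one_div_add_abs (by positivity) (by norm_num)]
        field_simp
        ring_nf
    _ ≤ 4 * (log (1 + 1) + |log √ε|) := by gcongr; exact log_one_add_div_le zero_le_one hsε
    _ ≤ 4 * (1 + |log ε|) := by
        rw [Real.log_sqrt hε.le, abs_div, abs_two]
        norm_num
        linarith [Real.log_two_lt_d9, abs_nonneg (log ε)]

lemma continuous_one_div_add_abs_sub {ε : ℝ} (hε : 0 < ε) (c : ℝ) :
    Continuous fun t : ℝ => 1 / (ε + |t - c|) :=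
  continuous_const.div (by fun_prop) fun t => by positivity

lemma integral_one_div_add_abs_cos_sub_le_of_sq {ε c m e : ℝ} (hε : 0 < ε) (he : 0 ≤ e)
    (hm : m ∈ Icc (0 : ℝ) (1 / 2))
    (hsq : ∀ y ∈ Icc (0 : ℝ) (1 / 2), 8 * (y - m) ^ 2 + e ≤ |cos (2 * π * y) - c|) :
    ∫ y in (0 : ℝ)..1, 1 / (ε + |cos (2 * π * y) - c|) ≤ 4 / √(ε + e) := by
  have hM : 0 < ε + e := by positivity
  have hsM : 0 < √(ε + e) := Real.sqrt_pos.2 hM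
  calc ∫ y in (0 : ℝ)..1, 1 / (ε + |cos (2 * π * y) - c|)
      ≤ 2 * ∫ u in -(1 / 2 : ℝ)..1 / 2, 1 / ((ε + e) + 8 * u ^ 2) :=
        integral_comp_cos_two_pi_le (continuous_one_div_add_abs_sub hε c)
          (continuous_const.div (by fun_prop) fun u => by positivity) (fun u => by positivity) hm
          fun y hy => one_div_le_one_div_of_le (by positivity) (by linarith [hsq y hy])
    _ ≤ 2 * (π / √(8 * (ε + e))) := by
        gcongr; exact integral_one_div_add_mul_sq_le hM (by norm_num) _ _
    _ ≤ 4 / √(ε + e) := by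
        have h8 : 2 ≤ √8 := by
          rw [Real.le_sqrt (by norm_num) (by norm_num)]; norm_num
        rw [Real.sqrt_mul (by norm_num), mul_div_assoc', div_le_div_iff₀ (by positivity) hsM]
        nlinarith [Real.pi_le_four, mul_le_mul_of_nonneg_right h8 hsM.le]

lemma mul_integral_one_div_add_abs_cos_sub_le_of_linear {ε c m d : ℝ} (hε : 0 < ε)
    (hd : d ∈ Icc (0 : ℝ) (1 / 4)) (hm : m ∈ Icc (0 : ℝ) (1 / 2))
    (hlin : ∀ y ∈ Icc (0 : ℝ) (1 / 2), 8 * d * |y - m| ≤ |cos (2 * π * y) - c|) :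
    d * ∫ y in (0 : ℝ)..1, 1 / (ε + |cos (2 * π * y) - c|) ≤ (1 + |log ε|) / 2 := by
  rcases hd.1.eq_or_lt with rfl | hd0
  · simp only [zero_mul]; positivity
  have hprofile : ∀ u : ℝ, 1 / (ε + 8 * d * |u|) = (8 * d)⁻¹ * (1 / (ε / (8 * d) + |u|)) :=
    fun u => by field_simp
  have hI := integral_comp_cos_two_pi_le (continuous_one_div_add_abs_sub hε c)
    (φ := fun u => 1 / (ε + 8 * d * |u|))
    (continuous_const.div (by fun_prop) fun u => by positivity) (fun u => by positivity) hm
    fun y hy => one_div_le_one_div_of_le (by positivity) (by linarith [hlin y hy])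
  simp_rw [hprofile] at hI
  rw [intervalIntegral.integral_const_mul,
    integral_one_div_add_abs (by positivity) (by norm_num)] at hI
  have hlog : log (1 + 1 / 2 / (ε / (8 * d))) ≤ 1 + |log ε| := by
    rw [show 1 / 2 / (ε / (8 * d)) = 4 * d / ε by field_simp; ring]
    calc log (1 + 4 * d / ε) ≤ log (1 + 4 * d) + |log ε| := log_one_add_div_le (by positivity) hε
      _ ≤ 1 + |log ε| := by
          gcongr
          calc log (1 + 4 * d) ≤ 1 + 4 * d - 1 := log_le_sub_one_of_pos (by positivity)
            _ ≤ 1 := by linarith [hd.2]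
  calc d * ∫ y in (0 : ℝ)..1, 1 / (ε + |cos (2 * π * y) - c|)
      ≤ d * (2 * ((8 * d)⁻¹ * (2 * log (1 + 1 / 2 / (ε / (8 * d)))))) := by gcongr
    _ = log (1 + 1 / 2 / (ε / (8 * d))) / 2 := by field_simp; ring
    _ ≤ (1 + |log ε|) / 2 := by gcongr

lemma integral_one_div_add_abs_cos_sub_le {ε : ℝ} (hε : 0 < ε) (c : ℝ) :
    ∫ y in (0 : ℝ)..1, 1 / (ε + |cos (2 * π * y) - c|)
      ≤ 7 * (1 + |log ε|) / √(ε + |(1 - |c|)|) := by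
  obtain ⟨m, hm, hcos, hkey⟩ := exists_abs_cos_two_pi_sub_ge c
  set I := ∫ y in (0 : ℝ)..1, 1 / (ε + |cos (2 * π * y) - c|)
  set d := min m (1 / 2 - m)
  have hL : 1 ≤ 1 + |log ε| := le_add_of_nonneg_right (abs_nonneg _)
  have hquad : I ≤ 4 / √(ε + (max |c| 1 - 1)) :=
    integral_one_div_add_abs_cos_sub_le_of_sq hε (by linarith [le_max_right |c| 1]) hm
      fun y hy => by
        nlinarith [hkey y hy, le_max_left |y - m| d, abs_nonneg (y - m), sq_abs (y - m)]
  have hpos : 0 < √(ε + |(1 - |c|)|) := Real.sqrt_pos.2 (by positivity)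
  rw [le_div_iff₀ hpos]
  rcases le_or_gt |c| 1 with hc | hc
  -- Both `√ε * I` and `d * I` are `O(log)`, and `√(1 - |c|) = O(d)` because `c = cos (2π m)`.
  · have hd : d ∈ Icc (0 : ℝ) (1 / 4) := by
      constructor
      · exact le_min hm.1 (by linarith [hm.2])
      · linarith [min_le_left m (1 / 2 - m), min_le_right m (1 / 2 - m)]
    have hlin := mul_integral_one_div_add_abs_cos_sub_le_of_linear hε hd hm fun y hy => by
      nlinarith [hkey y hy, le_max_right |y - m| d, abs_nonneg (y - m), le_max_right |c| 1,
        max_eq_right hc]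
    have hc' : cos (2 * π * m) = c := by
      rw [hcos, min_eq_right (abs_le.1 hc).2, max_eq_right (abs_le.1 hc).1]
    have hgap : 1 - |c| ≤ 20 * d ^ 2 := hc' ▸ one_sub_abs_cos_two_pi_le hm
    have hsε := Real.sq_sqrt hε.le
    have hsqrt : √(ε + |(1 - |c|)|) ≤ √ε + 5 * d := by
      rw [Real.sqrt_le_left (by linarith [Real.sqrt_nonneg ε, hd.1]), abs_of_nonneg (by linarith)]
      nlinarith [Real.sqrt_nonneg ε, hd.1]
    rw [max_eq_right hc, sub_self, add_zero] at hquad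
    have hI0 : 0 ≤ I := intervalIntegral.integral_nonneg zero_le_one fun y _ => by positivity
    have hIε : I * √ε ≤ 4 := by
      rwa [le_div_iff₀ (Real.sqrt_pos.2 hε)] at hquad
    calc I * √(ε + |(1 - |c|)|) ≤ I * (√ε + 5 * d) := by gcongr
      _ = I * √ε + 5 * (d * I) := by ring
      _ ≤ 7 * (1 + |log ε|) := by linarith
  · have he : |(1 - |c|)| = max |c| 1 - 1 := by
      rw [max_eq_left hc.le, abs_of_neg (by linarith)]; ring
    rw [he] at hpos ⊢
    rw [le_div_iff₀ hpos] at hquad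
    linarith

lemma one_div_sqrt_add_abs_one_sub_abs_le {ε : ℝ} (hε : 0 < ε) (c : ℝ) :
    1 / √(ε + |(1 - |c|)|) ≤ 1 / √(ε + |c - 1|) + 1 / √(ε + |c + 1|) := by
  rcases le_total 0 c with hc | hc
  · rw [abs_of_nonneg hc, abs_sub_comm]
    exact le_add_of_nonneg_right (by positivity)
  · rw [abs_of_nonpos hc, sub_neg_eq_add, add_comm 1 c]
    exact le_add_of_nonneg_left (by positivity)

lemma integral_box2_eq {F : ℝ → ℝ → ℝ} (hF : Continuous (Function.uncurry F)) :
    ∫ p in box2, F (p 0) (p 1) = ∫ x in (0 : ℝ)..1, ∫ y in (0 : ℝ)..1, F x y := by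
  have hbox : box2 = MeasurableEquiv.finTwoArrow ⁻¹' (Ico (0 : ℝ) 1 ×ˢ Ico (0 : ℝ) 1) := by
    ext p
    simp [box2, Fin.forall_fin_two]
  have hint : IntegrableOn (Function.uncurry F) (Ico (0 : ℝ) 1 ×ˢ Ico (0 : ℝ) 1)
      (volume.prod volume) :=
    (hF.continuousOn.integrableOn_compact (isCompact_Icc.prod isCompact_Icc)).mono_set
      (prod_mono Ico_subset_Icc_self Ico_subset_Icc_self)
  have hIco : ∀ f : ℝ → ℝ, ∫ x in Ico (0 : ℝ) 1, f x = ∫ x in (0 : ℝ)..1, f x := fun f => by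
    rw [intervalIntegral.integral_of_le zero_le_one, integral_Ico_eq_integral_Ioo,
      integral_Ioc_eq_integral_Ioo]
  calc ∫ p in box2, F (p 0) (p 1)
      = ∫ z in Ico (0 : ℝ) 1 ×ˢ Ico (0 : ℝ) 1, Function.uncurry F z := by
        rw [hbox]
        exact (volume_preserving_finTwoArrow ℝ).setIntegral_preimage_emb
          (MeasurableEquiv.measurableEmbedding _) (Function.uncurry F) _
    _ = ∫ x in (0 : ℝ)..1, ∫ y in (0 : ℝ)..1, F x y := by
        rw [Measure.volume_eq_prod, setIntegral_prod _ hint, hIco]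
        simp_rw [hIco]
        rfl

lemma integral_one_div_add_abs_disp2D_sub_le {ε : ℝ} (hε : 0 < ε) (lam : ℝ) :
    ∫ p in box2, 1 / (ε + |disp2D p - lam|) ≤ 56 * (1 + |log ε|) ^ 2 := by
  set L := 1 + |log ε|
  set G : ℝ → ℝ → ℝ := fun x y => 1 / (ε + |cos (2 * π * y) - (-lam - cos (2 * π * x))|)
  set ψ : ℝ → ℝ → ℝ := fun b x => 1 / √(ε + |cos (2 * π * x) - b|)
  have hG : Continuous (Function.uncurry G) :=
    continuous_const.div (by fun_prop) fun z => by positivity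
  have hψ : ∀ b, Continuous (ψ b) := fun b =>
    continuous_const.div (by fun_prop) fun x => (Real.sqrt_pos.2 (by positivity)).ne'
  have hdisp : (fun p => 1 / (ε + |disp2D p - lam|)) = fun p => G (p 0) (p 1) := by
    ext p
    simp only [G, disp2D, Fin.sum_univ_two]
    rw [abs_sub_comm]
    ring_nf
  have hinner : ∀ x, ∫ y in (0 : ℝ)..1, G x y ≤ 7 * L * (ψ (-lam - 1) x + ψ (1 - lam) x) := by
    intro x
    have hsplit := one_div_sqrt_add_abs_one_sub_abs_le hε (-lam - cos (2 * π * x))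
    rw [show |-lam - cos (2 * π * x) - 1| = |cos (2 * π * x) - (-lam - 1)| by
        rw [abs_sub_comm]; ring_nf,
      show |-lam - cos (2 * π * x) + 1| = |cos (2 * π * x) - (1 - lam)| by
        rw [← abs_neg]; ring_nf] at hsplit
    calc ∫ y in (0 : ℝ)..1, G x y ≤ 7 * L / √(ε + |(1 - |-lam - cos (2 * π * x)|)|) :=
          integral_one_div_add_abs_cos_sub_le hε _
      _ ≤ 7 * L * (ψ (-lam - 1) x + ψ (1 - lam) x) := by
          rw [div_eq_mul_one_div]
          exact mul_le_mul_of_nonneg_left hsplit (by positivity)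
  calc ∫ p in box2, 1 / (ε + |disp2D p - lam|)
      = ∫ x in (0 : ℝ)..1, ∫ y in (0 : ℝ)..1, G x y := by rw [hdisp]; exact integral_box2_eq hG
    _ ≤ ∫ x in (0 : ℝ)..1, 7 * L * (ψ (-lam - 1) x + ψ (1 - lam) x) :=
        intervalIntegral.integral_mono_on zero_le_one
          ((intervalIntegral.continuous_parametric_intervalIntegral_of_continuous' hG 0 1
            ).intervalIntegrable _ _)
          (((hψ _).add (hψ _)).const_mul _ |>.intervalIntegrable _ _) fun x _ => hinner x
    _ = 7 * L * ((∫ x in (0 : ℝ)..1, ψ (-lam - 1) x) + ∫ x in (0 : ℝ)..1, ψ (1 - lam) x) := by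
        rw [intervalIntegral.integral_const_mul, intervalIntegral.integral_add
          ((hψ _).intervalIntegrable _ _) ((hψ _).intervalIntegrable _ _)]
    _ ≤ 7 * L * (4 * L + 4 * L) := by
        gcongr <;> exact integral_one_div_sqrt_add_abs_cos_sub_le hε _
    _ = 56 * L ^ 2 := by ring

@[fun_prop]
lemma continuous_disp2D : Continuous disp2D := by
  unfold disp2D
  fun_prop

lemma abs_disp2D_le (p : Fin 2 → ℝ) : |disp2D p| ≤ 2 := by
  rw [disp2D, Fin.sum_univ_two, abs_neg]
  linarith [abs_add_le (cos (2 * π * p 0)) (cos (2 * π * p 1)), abs_cos_le_one (2 * π * p 0),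
    abs_cos_le_one (2 * π * p 1)]

lemma box2_subset_Icc : box2 ⊆ Icc 0 1 := fun _ hp =>
  ⟨fun i => (hp i (mem_univ i)).1, fun i => (hp i (mem_univ i)).2.le⟩

/-- The boundary `RectI`, shifted up by `ε ≤ 1/2`, keeps distance `ε` from the real segment
`[0, 6]` that contains the values of `e₂D(p) + 3 - cos (2π p₃)`. -/
lemma le_norm_ofReal_sub_sub_I_mul {α : ℂ} (hα : α ∈ RectI) {t ε : ℝ} (ht : t ∈ Icc (0 : ℝ) 6)
    (hε : ε ≤ 1 / 2) : ε ≤ ‖(t : ℂ) - α - Complex.I * ε‖ := by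
  obtain ⟨-, -, -, -, hbdry⟩ := hα
  have hre : |t - α.re| ≤ ‖(t : ℂ) - α - Complex.I * ε‖ := by
    simpa using Complex.abs_re_le_norm ((t : ℂ) - α - Complex.I * ε)
  have him : |-α.im - ε| ≤ ‖(t : ℂ) - α - Complex.I * ε‖ := by
    simpa using Complex.abs_im_le_norm ((t : ℂ) - α - Complex.I * ε)
  rcases hbdry with h | h | h | h
  · rw [h] at hre; linarith [le_abs_self (t - -1), ht.1]
  · rw [h] at hre; linarith [neg_abs_le (t - 7), ht.2]
  · rw [h] at him; linarith [le_abs_self (- -1 - ε)]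
  · rw [h] at him; linarith [neg_abs_le (-0 - ε)]

lemma one_div_norm_le {z : ℂ} {ε : ℝ} (hε : 0 < ε) (h : ε ≤ ‖z‖) :
    1 / ‖z‖ ≤ 2 * (1 / (ε + |z.re|)) := by
  rw [mul_one_div, div_le_div_iff₀ (hε.trans_le h) (by positivity)]
  linarith [Complex.abs_re_le_norm z]

lemma one_div_norm_resolvent_le {ε : ℝ} (hε : 0 < ε) (hε2 : ε ≤ 1 / 2) {α : ℂ} (hα : α ∈ RectI)
    (p : Fin 2 → ℝ) (p₃ : ℝ) :
    1 / ‖(disp2D p : ℂ) - (α - 3 + (cos (2 * π * p₃) : ℂ)) - Complex.I * ε‖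
      ≤ 2 * (1 / (ε + |disp2D p - (α.re - 3 + cos (2 * π * p₃))|)) := by
  have ht : disp2D p + 3 - cos (2 * π * p₃) ∈ Icc (0 : ℝ) 6 := by
    have := abs_le.1 (abs_disp2D_le p)
    constructor <;> linarith [neg_one_le_cos (2 * π * p₃), cos_le_one (2 * π * p₃)]
  have hz : (disp2D p : ℂ) - (α - 3 + (cos (2 * π * p₃) : ℂ)) - Complex.I * ε
      = ((disp2D p + 3 - cos (2 * π * p₃) : ℝ) : ℂ) - α - Complex.I * ε := by push_cast; ring
  have hre : (((disp2D p + 3 - cos (2 * π * p₃) : ℝ) : ℂ) - α - Complex.I * ε).re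
      = disp2D p - (α.re - 3 + cos (2 * π * p₃)) := by
    simp only [Complex.sub_re, Complex.ofReal_re, Complex.mul_re, Complex.I_re, Complex.I_im,
      Complex.ofReal_im]
    ring
  have h := one_div_norm_le hε (le_norm_ofReal_sub_sub_I_mul hα ht hε2)
  rwa [hre, ← hz] at h

lemma one_le_abs_log {ε : ℝ} (hε : 0 < ε) (hε3 : ε ≤ 1 / 3) : 1 ≤ |log ε| := by
  rw [abs_of_neg (log_neg hε (by linarith)), le_neg, log_le_iff_le_exp hε, Real.exp_neg,
    le_inv_comm₀ hε (exp_pos 1)]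
  linarith [Real.exp_one_lt_d9, show 3 ≤ ε⁻¹ by rw [le_inv_comm₀ (by norm_num) hε]; linarith]

theorem resolvent_L1_estimate_2d :
    ∃ C : ℝ, ∀ ε : ℝ, 0 < ε → ε ≤ 1 / 3 → ∀ α ∈ RectI, ∀ p₃ : ℝ, p₃ ∈ Set.Ico (0 : ℝ) 1 →
      ∫ p in box2,
          1 / ‖(disp2D p : ℂ) - (α - 3 + (Real.cos (2 * Real.pi * p₃) : ℂ))
            - Complex.I * (ε : ℂ)‖
        ≤ C * |Real.log ε| ^ 2 := by
  refine ⟨448, fun ε hε hε3 α hα p₃ _ => ?_⟩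
  set lam := α.re - 3 + cos (2 * π * p₃)
  have hint : IntegrableOn (fun p => 2 * (1 / (ε + |disp2D p - lam|))) box2 :=
    ((continuous_const.mul (continuous_const.div (by fun_prop) fun p => by positivity) :
      Continuous fun p => 2 * (1 / (ε + |disp2D p - lam|))).integrableOn_Icc).mono_set
      box2_subset_Icc
  have hlog := one_le_abs_log hε hε3
  calc ∫ p in box2, 1 / ‖(disp2D p : ℂ) - (α - 3 + (cos (2 * π * p₃) : ℂ)) - Complex.I * ε‖
      ≤ ∫ p in box2, 2 * (1 / (ε + |disp2D p - lam|)) :=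
        integral_mono_of_nonneg (ae_of_all _ fun p => by positivity) hint
          (ae_of_all _ fun p => one_div_norm_resolvent_le hε (by linarith) hα p p₃)
    _ = 2 * ∫ p in box2, 1 / (ε + |disp2D p - lam|) := integral_const_mul _ _
    _ ≤ 2 * (56 * (1 + |log ε|) ^ 2) := by
        gcongr; exact integral_one_div_add_abs_disp2D_sub_le hε lam
    _ ≤ 448 * |log ε| ^ 2 := by nlinarith
end

section
/- There exists a constant C < ∞ such that for every ρ ∈ ℝ and every ε with 0 < ε ≤ 1/3, the two-dimensional Lebesgue measure of the sublevel set {p ∈ [0,1)² : |e₂D(p) − ρ| ≤ ε} is at most C·ε·|log ε|. -/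
open MeasureTheory Real

/-!
By the symmetry `(x, y) ↦ (y, x)` it suffices to bound the part of the band
`|e₂D - ρ| ≤ ε` where `|sin 2πy| ≤ |sin 2πx|`. There the horizontal fibre over `y` is a set on
which `x ↦ cos 2πx` moves at speed at least `2π |sin 2πy|`, so it has length
`≲ min(1, ε / |sin 2πy|) ≲ min(1, ε / dist(y, {0, 1/2, 1}))`.
Integrating over `y` (Fubini) produces the factor `ε |log ε|`.
-/

open Set

lemma mul_sub_le_cos_sub_cos {a b s : ℝ} (ha : a ∈ Icc 0 π) (hb : b ∈ Icc 0 π) (hab : a ≤ b)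
    (hsa : s ≤ sin a) (hsb : s ≤ sin b) : s * (b - a) ≤ cos a - cos b := by
  have hsin : ∀ t ∈ Icc a b, s ≤ sin t := fun t ht =>
    (le_min hsa hsb).trans (strictConcaveOn_sin_Icc.concaveOn.min_le_of_mem_Icc ha hb ht)
  have hanti : AntitoneOn (fun t => cos t + s * t) (Icc a b) := by
    refine antitoneOn_of_deriv_nonpos (convex_Icc a b) (by fun_prop) (by fun_prop) fun t ht => ?_
    rw [interior_Icc] at ht
    have hderiv : HasDerivAt (fun t => cos t + s * t) (-sin t + s * 1) t :=
      (hasDerivAt_cos t).add ((hasDerivAt_id t).const_mul s)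
    rw [hderiv.deriv]
    linarith [hsin t (Ioo_subset_Icc_self ht)]
  linarith [hanti (left_mem_Icc.2 hab) (right_mem_Icc.2 hab) hab]

lemma volume_setOf_abs_cos_sub_le_of_le_sin (c ε : ℝ) {s : ℝ} (hs : 0 < s) :
    volume {x ∈ Icc (0 : ℝ) (1 / 2) | |cos (2 * π * x) - c| ≤ ε ∧ s ≤ sin (2 * π * x)}
      ≤ ENNReal.ofReal (ε / (π * s)) := by
  refine (Real.volume_le_diam _).trans (Metric.ediam_le_of_forall_dist_le fun x hx y hy => ?_)
  wlog hxy : x ≤ y generalizing x y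
  · rw [dist_comm]; exact this y hy x hx (le_of_not_ge hxy)
  obtain ⟨⟨hx0, hx1⟩, hxc, hxs⟩ := hx
  obtain ⟨⟨hy0, hy1⟩, hyc, hys⟩ := hy
  have hπ := pi_pos
  have hcos := mul_sub_le_cos_sub_cos (a := 2 * π * x) (b := 2 * π * y)
    ⟨by positivity, by nlinarith⟩ ⟨by positivity, by nlinarith⟩ (by nlinarith) hxs hys
  rw [Real.dist_eq, abs_sub_comm, abs_of_nonneg (sub_nonneg.2 hxy), le_div_iff₀ (by positivity)]
  nlinarith [abs_le.1 hxc, abs_le.1 hyc]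

lemma volume_setOf_abs_cos_sub_le_of_le_abs_sin (c : ℝ) {ε s : ℝ} (hε : 0 ≤ ε) (hs : 0 < s) :
    volume {x ∈ Ico (0 : ℝ) 1 | |cos (2 * π * x) - c| ≤ ε ∧ s ≤ |sin (2 * π * x)|}
      ≤ ENNReal.ofReal (2 * ε / (π * s)) := by
  set H : ℝ → Set ℝ := fun c =>
    {x ∈ Icc (0 : ℝ) (1 / 2) | |cos (2 * π * x) - c| ≤ ε ∧ s ≤ sin (2 * π * x)}
  have hπ := pi_pos
  -- on the second half-period, `x ↦ x - 1/2` flips the signs of `cos` and `sin`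
  have hsub : {x ∈ Ico (0 : ℝ) 1 | |cos (2 * π * x) - c| ≤ ε ∧ s ≤ |sin (2 * π * x)|}
      ⊆ H c ∪ (· + -(1 / 2)) ⁻¹' H (-c) := by
    rintro x ⟨⟨hx0, hx1⟩, hxc, hxs⟩
    rcases le_total x (1 / 2) with h | h
    · have hsin : 0 ≤ sin (2 * π * x) :=
        sin_nonneg_of_nonneg_of_le_pi (by positivity) (by nlinarith)
      exact Or.inl ⟨⟨hx0, h⟩, hxc, by rwa [abs_of_nonneg hsin] at hxs⟩
    · have hshift : 2 * π * (x + -(1 / 2)) = 2 * π * x - π := by ring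
      have hsin : 0 ≤ sin (2 * π * (x + -(1 / 2))) :=
        sin_nonneg_of_nonneg_of_le_pi (by nlinarith) (by nlinarith)
      rw [hshift, sin_sub_pi] at hsin
      refine Or.inr ⟨⟨by linarith, by linarith⟩, ?_, ?_⟩
      · rwa [hshift, cos_sub_pi, show -cos (2 * π * x) - -c = -(cos (2 * π * x) - c) by ring,
          abs_neg]
      · rwa [hshift, sin_sub_pi, ← abs_of_nonneg hsin, abs_neg]
  have hhalves : ENNReal.ofReal (ε / (π * s)) + ENNReal.ofReal (ε / (π * s))
      = ENNReal.ofReal (2 * ε / (π * s)) := by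
    rw [← ENNReal.ofReal_add (by positivity) (by positivity)]; ring_nf
  calc _ ≤ volume (H c ∪ (· + -(1 / 2)) ⁻¹' H (-c)) := measure_mono hsub
    _ ≤ volume (H c) + volume (H (-c)) := by
        rw [← measure_preimage_add_right volume (-(1 / 2)) (H (-c))]; exact measure_union_le _ _
    _ ≤ _ := hhalves ▸ add_le_add (volume_setOf_abs_cos_sub_le_of_le_sin c ε hs)
        (volume_setOf_abs_cos_sub_le_of_le_sin (-c) ε hs)

lemma four_mul_abs_le_abs_sin_two_pi_mul {t : ℝ} (ht : |t| ≤ 1 / 4) :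
    4 * |t| ≤ |sin (2 * π * t)| := by
  have hπ := pi_pos
  have h := mul_abs_le_abs_sin (x := 2 * π * t) (by
    rw [abs_mul, abs_of_pos (by positivity : (0 : ℝ) < 2 * π)]; nlinarith)
  rwa [abs_mul, abs_of_pos (by positivity : (0 : ℝ) < 2 * π), ← mul_assoc,
    show 2 / π * (2 * π) = 4 by field_simp; norm_num] at h

lemma exists_four_mul_abs_sub_le_abs_sin {y : ℝ} (hy : y ∈ Icc (0 : ℝ) 1) :
    ∃ c ∈ ({0, 1 / 2, 1} : Set ℝ), 4 * |y - c| ≤ |sin (2 * π * y)| := by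
  obtain ⟨hy0, hy1⟩ := hy
  rcases le_total y (1 / 4) with h | h
  · refine ⟨0, by simp, ?_⟩
    simpa using four_mul_abs_le_abs_sin_two_pi_mul (t := y) (abs_le.2 ⟨by linarith, h⟩)
  rcases le_total y (3 / 4) with h' | h'
  · refine ⟨1 / 2, by simp, ?_⟩
    have := four_mul_abs_le_abs_sin_two_pi_mul (t := y - 1 / 2)
      (abs_le.2 ⟨by linarith, by linarith⟩)
    rwa [show 2 * π * (y - 1 / 2) = 2 * π * y - π by ring, sin_sub_pi, abs_neg] at this
  · refine ⟨1, by simp, ?_⟩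
    have := four_mul_abs_le_abs_sin_two_pi_mul (t := y - 1) (abs_le.2 ⟨by linarith, by linarith⟩)
    rwa [show 2 * π * (y - 1) = 2 * π * y - 2 * π by ring, sin_sub_two_pi] at this

/-- Dominates `min 1 (A / |y - c|)` but, unlike it, has an elementary antiderivative. -/
noncomputable def peak (A c y : ℝ) : ℝ := 2 * A / (|y - c| + A)

/-- One peak at each zero of `y ↦ sin (2πy)` in `[0, 1]`. -/
noncomputable def peakSum (A y : ℝ) : ℝ := peak A 0 y + peak A (1 / 2) y + peak A 1 y

lemma peak_nonneg {A : ℝ} (hA : 0 ≤ A) (c y : ℝ) : 0 ≤ peak A c y := by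
  unfold peak; positivity

lemma continuous_peak {A : ℝ} (hA : 0 < A) (c : ℝ) : Continuous (peak A c) :=
  continuous_const.div (by fun_prop) fun y => by positivity

lemma peak_le_peakSum {A c : ℝ} (hA : 0 ≤ A) (hc : c ∈ ({0, 1 / 2, 1} : Set ℝ)) (y : ℝ) :
    peak A c y ≤ peakSum A y := by
  have := peak_nonneg hA 0 y
  have := peak_nonneg hA (1 / 2) y
  have := peak_nonneg hA 1 y
  rcases hc with rfl | rfl | rfl <;> unfold peakSum <;> linarith

lemma peakSum_nonneg {A : ℝ} (hA : 0 ≤ A) (y : ℝ) : 0 ≤ peakSum A y :=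
  (peak_nonneg hA 0 y).trans (peak_le_peakSum hA (by simp) y)

lemma continuous_peakSum {A : ℝ} (hA : 0 < A) : Continuous (peakSum A) :=
  ((continuous_peak hA 0).add (continuous_peak hA _)).add (continuous_peak hA 1)

lemma le_ofReal_peak {A c y : ℝ} {v : ENNReal} (hA : 0 < A) (hv₁ : v ≤ 1)
    (hv : 0 < |y - c| → v ≤ ENNReal.ofReal (A / |y - c|)) :
    v ≤ ENNReal.ofReal (peak A c y) := by
  rcases (abs_nonneg (y - c)).eq_or_lt with h | h
  · refine hv₁.trans ?_
    rw [peak, ← h, zero_add, ENNReal.one_le_ofReal, le_div_iff₀ hA]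
    linarith
  have hmin : min 1 (A / |y - c|) ≤ peak A c y := by
    rw [peak]
    rcases le_total |y - c| A with hd | hd
    · refine (min_le_left _ _).trans ?_
      rw [le_div_iff₀ (by positivity)]; linarith
    · refine (min_le_right _ _).trans ?_
      rw [div_le_div_iff₀ h (by positivity)]; nlinarith
  calc v ≤ min 1 (ENNReal.ofReal (A / |y - c|)) := le_min hv₁ (hv h)
    _ = ENNReal.ofReal (min 1 (A / |y - c|)) := by rw [ENNReal.ofReal_min, ENNReal.ofReal_one]
    _ ≤ ENNReal.ofReal (peak A c y) := ENNReal.ofReal_le_ofReal hmin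

lemma integral_two_mul_div_add {A u : ℝ} (hA : 0 < A) (hu : 0 ≤ u) :
    ∫ t in (0 : ℝ)..u, 2 * A / (t + A) = 2 * A * log ((u + A) / A) := by
  simp_rw [div_eq_mul_inv (2 * A)]
  rw [intervalIntegral.integral_const_mul, intervalIntegral.integral_comp_add_right (·⁻¹),
    zero_add, integral_inv_of_pos hA (by linarith)]

lemma integral_peak_le {A c : ℝ} (hA : 0 < A) (hc : c ∈ Icc (0 : ℝ) 1) :
    ∫ y in (0 : ℝ)..1, peak A c y ≤ 4 * A * log (1 + 1 / A) := by
  obtain ⟨hc0, hc1⟩ := hc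
  have hint : ∀ a b, IntervalIntegrable (peak A c) volume a b := fun a b =>
    (continuous_peak hA c).intervalIntegrable a b
  have hleft : ∫ y in (0 : ℝ)..c, peak A c y = 2 * A * log ((c + A) / A) := by
    rw [intervalIntegral.integral_congr (g := fun y => 2 * A / ((c - y) + A)) fun y hy => by
      rw [uIcc_of_le hc0] at hy; rw [peak, abs_of_nonpos (by linarith [hy.2]), neg_sub],
      intervalIntegral.integral_comp_sub_left (fun t => 2 * A / (t + A)), sub_self, sub_zero,
      integral_two_mul_div_add hA hc0]
  have hright : ∫ y in c..1, peak A c y = 2 * A * log ((1 - c + A) / A) := by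
    rw [intervalIntegral.integral_congr (g := fun y => 2 * A / ((y - c) + A)) fun y hy => by
      rw [uIcc_of_le hc1] at hy; rw [peak, abs_of_nonneg (by linarith [hy.1])],
      intervalIntegral.integral_comp_sub_right (fun t => 2 * A / (t + A)), sub_self,
      integral_two_mul_div_add hA (by linarith)]
  have hlog : ∀ u ∈ Icc (0 : ℝ) 1, log ((u + A) / A) ≤ log (1 + 1 / A) := fun u hu =>
    log_le_log (div_pos (by linarith [hu.1]) hA)
      (by rw [add_div, div_self hA.ne', add_comm]; gcongr; exact hu.2)
  rw [← intervalIntegral.integral_add_adjacent_intervals (hint 0 c) (hint c 1), hleft, hright]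
  nlinarith [hlog c ⟨hc0, hc1⟩, hlog (1 - c) ⟨by linarith, by linarith⟩]

lemma integral_peakSum_le {A : ℝ} (hA : 0 < A) :
    ∫ y in (0 : ℝ)..1, peakSum A y ≤ 12 * A * log (1 + 1 / A) := by
  have hint := fun c => (continuous_peak hA c).intervalIntegrable (μ := volume) 0 1
  unfold peakSum
  rw [intervalIntegral.integral_add ((hint 0).add (hint _)) (hint 1),
    intervalIntegral.integral_add (hint 0) (hint _)]
  linarith [integral_peak_le hA (c := 0) (by norm_num),
    integral_peak_le hA (c := 1 / 2) (by norm_num), integral_peak_le hA (c := 1) (by norm_num)]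

lemma prod_apply_le_two_mul_inter_of_swap_preimage_eq {α β : Type*} [MeasurableSpace α]
    [LinearOrder β] (μ : Measure α) [SFinite μ] {S : Set (α × α)} (hS : Prod.swap ⁻¹' S = S)
    (f : α → β) : μ.prod μ S ≤ 2 * μ.prod μ (S ∩ {q | f q.2 ≤ f q.1}) := by
  set T := S ∩ {q | f q.2 ≤ f q.1}
  have hsub : S ⊆ T ∪ Prod.swap ⁻¹' T := fun q hq => by
    rcases le_total (f q.2) (f q.1) with h | h
    · exact Or.inl ⟨hq, h⟩
    · exact Or.inr ⟨by rwa [← hS] at hq, h⟩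
  have hswap : μ.prod μ (Prod.swap ⁻¹' T) = μ.prod μ T :=
    Measure.measurePreserving_swap.measure_preimage_equiv (f := MeasurableEquiv.prodComm) T
  calc μ.prod μ S ≤ μ.prod μ (T ∪ Prod.swap ⁻¹' T) := measure_mono hsub
    _ ≤ μ.prod μ T + μ.prod μ (Prod.swap ⁻¹' T) := measure_union_le _ _
    _ = 2 * μ.prod μ T := by rw [hswap, two_mul]

def levelBand (ρ ε : ℝ) : Set (ℝ × ℝ) :=
  {q ∈ Ico (0 : ℝ) 1 ×ˢ Ico (0 : ℝ) 1 | |-cos (2 * π * q.1) - cos (2 * π * q.2) - ρ| ≤ ε}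

/-- The part of `levelBand ρ ε` where `|∂ₓ e₂D| ≥ |∂ᵧ e₂D|`. -/
def steepLevelBand (ρ ε : ℝ) : Set (ℝ × ℝ) :=
  levelBand ρ ε ∩ {q | |sin (2 * π * q.2)| ≤ |sin (2 * π * q.1)|}

lemma volume_setOf_mem_box2_eq (ρ ε : ℝ) :
    volume {p ∈ box2 | |disp2D p - ρ| ≤ ε} = volume (levelBand ρ ε) := by
  have hpre : {p ∈ box2 | |disp2D p - ρ| ≤ ε} = MeasurableEquiv.finTwoArrow ⁻¹' levelBand ρ ε := by
    ext p
    simp only [levelBand, box2, disp2D, mem_ofPred_eq, mem_preimage, mem_pi, mem_univ,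
      forall_const, Fin.forall_fin_two, Fin.sum_univ_two, mem_prod,
      MeasurableEquiv.finTwoArrow_apply, neg_add']
  rw [hpre, (volume_preserving_finTwoArrow ℝ).measure_preimage_equiv]

lemma swap_preimage_levelBand (ρ ε : ℝ) : Prod.swap ⁻¹' levelBand ρ ε = levelBand ρ ε := by
  ext ⟨x, y⟩
  simp only [levelBand, mem_preimage, Prod.swap_prod_mk, mem_ofPred_eq, mem_prod]
  rw [neg_sub_comm, and_comm (a := y ∈ _)]

lemma volume_levelBand_le (ρ ε : ℝ) :
    volume (levelBand ρ ε) ≤ 2 * volume (steepLevelBand ρ ε) := by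
  rw [Measure.volume_eq_prod]
  exact prod_apply_le_two_mul_inter_of_swap_preimage_eq volume (swap_preimage_levelBand ρ ε)
    fun x => |sin (2 * π * x)|

lemma measurableSet_steepLevelBand (ρ ε : ℝ) : MeasurableSet (steepLevelBand ρ ε) :=
  ((measurableSet_Ico.prod measurableSet_Ico).inter (measurableSet_le
    (by fun_prop : Measurable fun q : ℝ × ℝ => |-cos (2 * π * q.1) - cos (2 * π * q.2) - ρ|)
    measurable_const)).inter (measurableSet_le (by fun_prop) (by fun_prop))

lemma volume_fiber_steepLevelBand_le {ρ ε : ℝ} (hε : 0 < ε) (y : ℝ) :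
    volume ((fun x => (x, y)) ⁻¹' steepLevelBand ρ ε)
      ≤ (Icc (0 : ℝ) 1).indicator (fun y => ENNReal.ofReal (peakSum (ε / (2 * π)) y)) y := by
  set A := ε / (2 * π)
  have hπ := pi_pos
  have hA : 0 < A := by positivity
  by_cases hy : y ∈ Ico (0 : ℝ) 1
  swap
  · have hempty : (fun x => (x, y)) ⁻¹' steepLevelBand ρ ε = ∅ :=
      eq_empty_of_forall_notMem fun x hx => hy hx.1.1.2
    rw [hempty, measure_empty]
    exact zero_le
  rw [indicator_of_mem (Ico_subset_Icc_self hy)]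
  have hsub : (fun x => (x, y)) ⁻¹' steepLevelBand ρ ε
      ⊆ {x ∈ Ico (0 : ℝ) 1 | |cos (2 * π * x) - (-cos (2 * π * y) - ρ)| ≤ ε ∧
          |sin (2 * π * y)| ≤ |sin (2 * π * x)|} := by
    rintro x ⟨⟨⟨hx, -⟩, hxy⟩, hsin⟩
    refine ⟨hx, ?_, hsin⟩
    rwa [show cos (2 * π * x) - (-cos (2 * π * y) - ρ) = -(-cos (2 * π * x) - cos (2 * π * y) - ρ)
      by ring, abs_neg]
  obtain ⟨c, hc, hcy⟩ := exists_four_mul_abs_sub_le_abs_sin (Ico_subset_Icc_self hy)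
  refine (le_ofReal_peak (c := c) hA ((measure_mono hsub).trans ?_) fun hd => ?_).trans
    (ENNReal.ofReal_le_ofReal (peak_le_peakSum hA.le hc y))
  · exact (measure_mono fun x hx => hx.1).trans (by simp)
  · have hs : 0 < |sin (2 * π * y)| := by linarith
    refine (measure_mono hsub).trans <|
      (volume_setOf_abs_cos_sub_le_of_le_abs_sin _ hε.le hs).trans (ENNReal.ofReal_le_ofReal ?_)
    have hAπ : A * π = ε / 2 := by simp only [A]; field_simp
    rw [div_le_div_iff₀ (by positivity) hd]
    nlinarith

lemma volume_steepLevelBand_le {ρ ε : ℝ} (hε : 0 < ε) :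
    volume (steepLevelBand ρ ε) ≤ ENNReal.ofReal (∫ y in (0 : ℝ)..1, peakSum (ε / (2 * π)) y) := by
  have hA : 0 < ε / (2 * π) := by positivity
  rw [Measure.volume_eq_prod, Measure.prod_apply_symm (measurableSet_steepLevelBand ρ ε),
    intervalIntegral.integral_of_le zero_le_one, ← integral_Icc_eq_integral_Ioc,
    ofReal_integral_eq_lintegral_ofReal (continuous_peakSum hA).integrableOn_Icc
      (ae_of_all _ (peakSum_nonneg hA.le)), ← lintegral_indicator measurableSet_Icc]
  exact lintegral_mono (volume_fiber_steepLevelBand_le hε)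

lemma log_one_add_two_pi_div_le {ε : ℝ} (hε : 0 < ε) (hε3 : ε ≤ 1 / 3) :
    log (1 + 2 * π / ε) ≤ 3 * |log ε| := by
  have hπ := pi_le_four
  have hpow : 1 + 2 * π / ε ≤ (ε ^ 3)⁻¹ := by
    rw [← one_div, le_div_iff₀ (by positivity), add_mul, div_mul_eq_mul_div, pow_succ,
      ← mul_assoc, mul_div_assoc, mul_div_cancel_right₀ _ hε.ne']
    nlinarith [pow_pos hε 2, pi_pos]
  calc log (1 + 2 * π / ε) ≤ log ((ε ^ 3)⁻¹) := log_le_log (by positivity) hpow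
    _ = 3 * |log ε| := by
      rw [log_inv, log_pow, abs_of_neg (log_neg hε (by linarith))]; push_cast; ring

theorem level_set_measure_2d :
    ∃ C : ℝ, ∀ ρ : ℝ, ∀ ε : ℝ, 0 < ε → ε ≤ 1 / 3 →
      volume {p ∈ box2 | |disp2D p - ρ| ≤ ε} ≤ ENNReal.ofReal (C * ε * |Real.log ε|) := by
  refine ⟨12, fun ρ ε hε hε3 => ?_⟩
  set A := ε / (2 * π) with hA_def
  have hA : 0 < A := by positivity
  have hlog : log (1 + 1 / A) ≤ 3 * |log ε| := by
    rw [hA_def, one_div_div]; exact log_one_add_two_pi_div_le hε hε3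
  have hA_le : 24 * A ≤ 4 * ε := by
    rw [hA_def, mul_div_assoc', div_le_iff₀ (by positivity)]; nlinarith [pi_gt_three]
  calc volume {p ∈ box2 | |disp2D p - ρ| ≤ ε} = volume (levelBand ρ ε) :=
        volume_setOf_mem_box2_eq ρ ε
    _ ≤ 2 * volume (steepLevelBand ρ ε) := volume_levelBand_le ρ ε
    _ ≤ 2 * ENNReal.ofReal (12 * A * log (1 + 1 / A)) := by
        gcongr
        exact (volume_steepLevelBand_le hε).trans (ENNReal.ofReal_le_ofReal (integral_peakSum_le hA))
    _ ≤ ENNReal.ofReal (12 * ε * |log ε|) := by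
        rw [← ENNReal.ofReal_ofNat 2, ← ENNReal.ofReal_mul zero_le_two]
        refine ENNReal.ofReal_le_ofReal ?_
        nlinarith [log_nonneg (show 1 ≤ 1 + 1 / A by have := one_div_pos.2 hA; linarith)]
end

section
/- Let K : ℝ³ × ℤ³ → ℂ be such that for each w ∈ ℤ³ the map X ↦ K(X,w) is continuously differentiable, and assume Σ_{w∈ℤ³} sup_{X∈ℝ³} |K(X,w)| < ∞ and A := Σ_{w∈ℤ³} sup_{X∈ℝ³} (1 + |X|)·|∇_X K(X,w)| < ∞. Then for every ψ ∈ ℓ²(ℤ³), the double sum F(η) := Σ_{y,z∈ℤ³} K(η(y+z)/2, z−y) · conj(ψ(y)) · ψ(z) converges absolutely for every η > 0, the function F is differentiable on (0,∞), and |F′(η)| ≤ A · ‖ψ‖²_{ℓ²} / η for all η > 0. -/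
/-!
Differentiate term by term. At `X = η (y + z) / 2` the `η`-derivative of the `(y, z)` term is
`∇K(X, z - y) · (y + z) / 2 = ∇K(X, z - y) · X / η`, so it is bounded by
`η⁻¹ sup_X |X| |∇K(X, z - y)| · |ψ y| |ψ z|`. A kernel `c (z - y)` with `c ≥ 0` summable is bounded
on `ℓ²` by `∑ c` (in the coordinates `z = y + w`, use `2ab ≤ a² + b²` and translation invariance
of the `ℓ²` norm). This gives absolute convergence, the bound on `F'`, and on `(η / 2, ∞)` a
summable domination of the derivatives that justifies differentiating under the sum.
-/

open MeasureTheory Real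

/-- The Euclidean norm on `ℝ³` (realized as `Fin 3 → ℝ`). -/
noncomputable def eunorm3 (x : Fin 3 → ℝ) : ℝ := Real.sqrt (∑ i, x i ^ 2)

lemma norm_le_eunorm3 (x : Fin 3 → ℝ) : ‖x‖ ≤ eunorm3 x := by
  rw [eunorm3, pi_norm_le_iff_of_nonneg (Real.sqrt_nonneg _)]
  intro i
  rw [Real.norm_eq_abs, ← Real.sqrt_sq_eq_abs]
  exact Real.sqrt_le_sqrt (Finset.single_le_sum (fun j _ => sq_nonneg (x j)) (Finset.mem_univ i))

lemma lp.hasSum_norm_sq {ι : Type*} {E : ι → Type*} [∀ i, NormedAddCommGroup (E i)]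
    (ψ : lp E 2) : HasSum (fun i => ‖ψ i‖ ^ 2) (‖ψ‖ ^ 2) := by
  simpa using lp.hasSum_norm (p := 2) (by norm_num) ψ

section TranslationKernel

variable {G E : Type*} [AddCommGroup G] [NormedAddCommGroup E]

lemma lp.hasSum_half_norm_sq_add_norm_sq_add (ψ : lp (fun _ : G => E) 2) (w : G) :
    HasSum (fun y => (‖ψ y‖ ^ 2 + ‖ψ (y + w)‖ ^ 2) / 2) (‖ψ‖ ^ 2) := by
  have hshift : HasSum (fun y => ‖ψ (y + w)‖ ^ 2) (‖ψ‖ ^ 2) :=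
    (Equiv.addRight w).hasSum_iff (f := fun y => ‖ψ y‖ ^ 2) |>.mpr (lp.hasSum_norm_sq ψ)
  simpa only [add_self_div_two] using ((lp.hasSum_norm_sq ψ).add hshift).div_const 2

lemma norm_mul_norm_le_half_sq_add_sq (a b : E) :
    ‖a‖ * ‖b‖ ≤ (‖a‖ ^ 2 + ‖b‖ ^ 2) / 2 := by
  linarith [two_mul_le_add_sq ‖a‖ ‖b‖]

lemma lp.summable_norm_mul_norm_add (ψ : lp (fun _ : G => E) 2) (w : G) :
    Summable fun y => ‖ψ y‖ * ‖ψ (y + w)‖ :=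
  .of_nonneg_of_le (fun _ => by positivity) (fun _ => norm_mul_norm_le_half_sq_add_sq _ _)
    (lp.hasSum_half_norm_sq_add_norm_sq_add ψ w).summable

lemma lp.tsum_norm_mul_norm_add_le (ψ : lp (fun _ : G => E) 2) (w : G) :
    ∑' y, ‖ψ y‖ * ‖ψ (y + w)‖ ≤ ‖ψ‖ ^ 2 :=
  hasSum_le (fun _ => norm_mul_norm_le_half_sq_add_sq _ _)
    (lp.summable_norm_mul_norm_add ψ w).hasSum (lp.hasSum_half_norm_sq_add_norm_sq_add ψ w)

variable {c : G → ℝ}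

lemma lp.summable_mul_norm_mul_norm_add (hc : ∀ w, 0 ≤ c w) (hcs : Summable c)
    (ψ : lp (fun _ : G => E) 2) :
    Summable fun q : G × G => c q.1 * (‖ψ q.2‖ * ‖ψ (q.2 + q.1)‖) := by
  have hnonneg (q : G × G) : 0 ≤ c q.1 * (‖ψ q.2‖ * ‖ψ (q.2 + q.1)‖) :=
    mul_nonneg (hc q.1) (by positivity)
  refine (summable_prod_of_nonneg hnonneg).mpr
    ⟨fun w => (lp.summable_norm_mul_norm_add ψ w).mul_left (c w), ?_⟩
  refine .of_nonneg_of_le (fun w => tsum_nonneg fun y => hnonneg (w, y))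
    (fun w => ?_) (hcs.mul_right (‖ψ‖ ^ 2))
  dsimp only
  rw [tsum_mul_left]
  exact mul_le_mul_of_nonneg_left (lp.tsum_norm_mul_norm_add_le ψ w) (hc w)

lemma lp.tsum_mul_norm_mul_norm_add_le (hc : ∀ w, 0 ≤ c w) (hcs : Summable c)
    (ψ : lp (fun _ : G => E) 2) :
    ∑' q : G × G, c q.1 * (‖ψ q.2‖ * ‖ψ (q.2 + q.1)‖) ≤ (∑' w, c w) * ‖ψ‖ ^ 2 := by
  have hfib w : Summable fun y => c w * (‖ψ y‖ * ‖ψ (y + w)‖) :=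
    (lp.summable_norm_mul_norm_add ψ w).mul_left (c w)
  rw [(lp.summable_mul_norm_mul_norm_add hc hcs ψ).tsum_prod' hfib, ← tsum_mul_right]
  refine Summable.tsum_le_tsum (fun w => ?_) ?_ (hcs.mul_right _)
  · dsimp only
    rw [tsum_mul_left]
    exact mul_le_mul_of_nonneg_left (lp.tsum_norm_mul_norm_add_le ψ w) (hc w)
  · exact (lp.summable_mul_norm_mul_norm_add hc hcs ψ).prod

/-- The change of variables `(w, y) ↦ (y, y + w)`. -/
def Equiv.translationCoords (G : Type*) [AddGroup G] : G × G ≃ G × G :=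
  (Equiv.prodComm G G).trans ((Equiv.refl G).prodShear Equiv.addLeft)

lemma lp.summable_translation_kernel (hc : ∀ w, 0 ≤ c w) (hcs : Summable c)
    (ψ : lp (fun _ : G => E) 2) :
    Summable fun p : G × G => c (p.2 - p.1) * ‖ψ p.1‖ * ‖ψ p.2‖ := by
  refine (Equiv.translationCoords G).summable_iff.mp ?_
  simpa [Function.comp_def, Equiv.translationCoords, mul_assoc]
    using lp.summable_mul_norm_mul_norm_add hc hcs ψ

lemma lp.tsum_translation_kernel_le (hc : ∀ w, 0 ≤ c w) (hcs : Summable c)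
    (ψ : lp (fun _ : G => E) 2) :
    ∑' p : G × G, c (p.2 - p.1) * ‖ψ p.1‖ * ‖ψ p.2‖ ≤ (∑' w, c w) * ‖ψ‖ ^ 2 := by
  rw [← (Equiv.translationCoords G).tsum_eq]
  simpa [Equiv.translationCoords, mul_assoc] using lp.tsum_mul_norm_mul_norm_add_le hc hcs ψ

end TranslationKernel

lemma ContinuousLinearMap.norm_apply_half_smul_le {V F : Type*} [NormedAddCommGroup V]
    [NormedSpace ℝ V] [NormedAddCommGroup F] [NormedSpace ℝ F] (L : V →L[ℝ] F) (v : V)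
    {η : ℝ} (hη : 0 < η) : ‖L ((1 / 2 : ℝ) • v)‖ ≤ η⁻¹ * (‖(η / 2) • v‖ * ‖L‖) := by
  calc ‖L ((1 / 2 : ℝ) • v)‖ ≤ ‖L‖ * ‖(1 / 2 : ℝ) • v‖ := L.le_opNorm _
    _ = η⁻¹ * (‖(η / 2) • v‖ * ‖L‖) := by
      rw [norm_smul, norm_smul, Real.norm_of_nonneg (by positivity : 0 ≤ η / 2)]
      norm_num
      field_simp

section WignerPairing

variable {G V 𝕜 : Type*} [AddCommGroup G] [NormedAddCommGroup V] [NormedSpace ℝ V] [RCLike 𝕜]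
  (K : V → G → 𝕜) (pos : G × G → V) (ψ : lp (fun _ : G => 𝕜) 2)

/-- The `(y, z)` term of `⟨J, W^η[ψ]⟩`; `pos (y, z)` stands for `y + z` embedded in `V`. -/
noncomputable def wignerTerm (η : ℝ) (p : G × G) : 𝕜 :=
  K ((η / 2) • pos p) (p.2 - p.1) * starRingEnd 𝕜 (ψ p.1) * ψ p.2

noncomputable def wignerTermDeriv (η : ℝ) (p : G × G) : 𝕜 :=
  fderiv ℝ (K · (p.2 - p.1)) ((η / 2) • pos p) ((1 / 2 : ℝ) • pos p) *
    starRingEnd 𝕜 (ψ p.1) * ψ p.2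

variable {K pos} {S D : G → ℝ}

lemma norm_wignerTerm_le (hS : ∀ X w, ‖K X w‖ ≤ S w) (η : ℝ) (p : G × G) :
    ‖wignerTerm K pos ψ η p‖ ≤ S (p.2 - p.1) * ‖ψ p.1‖ * ‖ψ p.2‖ := by
  rw [wignerTerm, norm_mul, norm_mul, RCLike.norm_conj]
  gcongr
  exact hS _ _

lemma hasDerivAt_wignerTerm (hK : ∀ w, Differentiable ℝ (K · w)) (η : ℝ) (p : G × G) :
    HasDerivAt (wignerTerm K pos ψ · p) (wignerTermDeriv K pos ψ η p) η := by
  have hpos : HasDerivAt (fun t : ℝ => (t / 2) • pos p) ((1 / 2 : ℝ) • pos p) η :=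
    ((hasDerivAt_id η).div_const 2).smul_const _
  exact ((((hK _) _).hasFDerivAt.comp_hasDerivAt η hpos).mul_const _).mul_const _

lemma norm_wignerTermDeriv_le (hD : ∀ X w, ‖X‖ * ‖fderiv ℝ (K · w) X‖ ≤ D w)
    {η : ℝ} (hη : 0 < η) (p : G × G) :
    ‖wignerTermDeriv K pos ψ η p‖ ≤ η⁻¹ * D (p.2 - p.1) * ‖ψ p.1‖ * ‖ψ p.2‖ := by
  rw [wignerTermDeriv, norm_mul, norm_mul, RCLike.norm_conj]
  gcongr
  exact ((fderiv ℝ _ _).norm_apply_half_smul_le _ hη).trans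
    (mul_le_mul_of_nonneg_left (hD _ _) (inv_nonneg.mpr hη.le))

lemma summable_norm_wignerTerm (hS : ∀ X w, ‖K X w‖ ≤ S w) (hSs : Summable S) (η : ℝ) :
    Summable fun p => ‖wignerTerm K pos ψ η p‖ :=
  .of_nonneg_of_le (fun _ => norm_nonneg _) (norm_wignerTerm_le ψ hS η)
    (lp.summable_translation_kernel (fun w => (norm_nonneg _).trans (hS 0 w)) hSs ψ)

lemma hasDerivAt_tsum_wignerTerm (hK : ∀ w, Differentiable ℝ (K · w))
    (hS : ∀ X w, ‖K X w‖ ≤ S w) (hSs : Summable S)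
    (hD : ∀ X w, ‖X‖ * ‖fderiv ℝ (K · w) X‖ ≤ D w) (hDs : Summable D) {η : ℝ} (hη : 0 < η) :
    HasDerivAt (fun t => ∑' p, wignerTerm K pos ψ t p) (∑' p, wignerTermDeriv K pos ψ η p) η := by
  have hD0 w : 0 ≤ D w := by simpa using hD 0 w
  have hη2 : η / 2 < η := half_lt_self hη
  refine hasDerivAt_tsum_of_isPreconnected (t := Set.Ioi (η / 2))
    (g := fun p t => wignerTerm K pos ψ t p)
    (u := fun p => 2 / η * D (p.2 - p.1) * ‖ψ p.1‖ * ‖ψ p.2‖)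
    (lp.summable_translation_kernel (fun w => mul_nonneg (by positivity) (hD0 w))
      (hDs.mul_left _) ψ)
    isOpen_Ioi (convex_Ioi _).isPreconnected (fun p t _ => hasDerivAt_wignerTerm ψ hK t p)
    (fun p t ht => ?_) hη2 (summable_norm_wignerTerm ψ hS hSs η).of_norm hη2
  have ht0 : 0 < t := (half_pos hη).trans ht
  have htinv : t⁻¹ ≤ 2 / η := by
    rw [← inv_div]
    exact inv_anti₀ (half_pos hη) ht.le
  refine (norm_wignerTermDeriv_le ψ hD ht0 p).trans ?_
  gcongr
  exact hD0 _

lemma norm_tsum_wignerTermDeriv_le (hD : ∀ X w, ‖X‖ * ‖fderiv ℝ (K · w) X‖ ≤ D w)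
    (hDs : Summable D) {η : ℝ} (hη : 0 < η) :
    ‖∑' p, wignerTermDeriv K pos ψ η p‖ ≤ (∑' w, D w) * ‖ψ‖ ^ 2 / η := by
  have hc w : 0 ≤ η⁻¹ * D w := mul_nonneg (inv_nonneg.mpr hη.le) (by simpa using hD 0 w)
  calc ‖∑' p, wignerTermDeriv K pos ψ η p‖
      ≤ ∑' p : G × G, η⁻¹ * D (p.2 - p.1) * ‖ψ p.1‖ * ‖ψ p.2‖ :=
        tsum_of_norm_bounded (lp.summable_translation_kernel hc (hDs.mul_left _) ψ).hasSum
          (norm_wignerTermDeriv_le ψ hD hη)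
    _ ≤ (∑' w, η⁻¹ * D w) * ‖ψ‖ ^ 2 := lp.tsum_translation_kernel_le hc (hDs.mul_left _) ψ
    _ = (∑' w, D w) * ‖ψ‖ ^ 2 / η := by
      rw [tsum_mul_left]
      field_simp

end WignerPairing

theorem wigner_test_derivative_bound
    (K : (Fin 3 → ℝ) → (Fin 3 → ℤ) → ℂ)
    (hK1 : ∀ w, ContDiff ℝ 1 (fun X => K X w))
    (hbdd : ∀ w : Fin 3 → ℤ, BddAbove (Set.range fun X => ‖K X w‖))
    (hsum : Summable fun w : Fin 3 → ℤ => ⨆ X : Fin 3 → ℝ, ‖K X w‖)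
    (hbddD : ∀ w : Fin 3 → ℤ, BddAbove (Set.range fun X : Fin 3 → ℝ =>
      (1 + eunorm3 X) * ‖fderiv ℝ (fun X' => K X' w) X‖))
    (hsumD : Summable fun w : Fin 3 → ℤ => ⨆ X : Fin 3 → ℝ,
      (1 + eunorm3 X) * ‖fderiv ℝ (fun X' => K X' w) X‖)
    (A : ℝ)
    (hA : A = ∑' w : Fin 3 → ℤ, ⨆ X : Fin 3 → ℝ,
      (1 + eunorm3 X) * ‖fderiv ℝ (fun X' => K X' w) X‖)
    (ψ : lp (fun _ : Fin 3 → ℤ => ℂ) 2)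
    (F : ℝ → ℂ)
    (hF : ∀ η : ℝ, F η = ∑' yz : (Fin 3 → ℤ) × (Fin 3 → ℤ),
      K ((η / 2) • fun i => ((yz.1 i + yz.2 i : ℤ) : ℝ)) (yz.2 - yz.1) *
        (starRingEnd ℂ) (ψ yz.1) * ψ yz.2) :
    (∀ η : ℝ, 0 < η → Summable fun yz : (Fin 3 → ℤ) × (Fin 3 → ℤ) =>
        ‖K ((η / 2) • fun i => ((yz.1 i + yz.2 i : ℤ) : ℝ)) (yz.2 - yz.1) *
          (starRingEnd ℂ) (ψ yz.1) * ψ yz.2‖) ∧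
    (∀ η : ℝ, 0 < η → DifferentiableAt ℝ F η) ∧
    (∀ η : ℝ, 0 < η → ‖deriv F η‖ ≤ A * ‖ψ‖ ^ 2 / η) := by
  have hK w : Differentiable ℝ (K · w) := (hK1 w).differentiable one_ne_zero
  have hS X w : ‖K X w‖ ≤ ⨆ X, ‖K X w‖ := le_ciSup (hbdd w) X
  have hD X w : ‖X‖ * ‖fderiv ℝ (K · w) X‖ ≤
      ⨆ X, (1 + eunorm3 X) * ‖fderiv ℝ (fun X' => K X' w) X‖ := by
    refine le_trans ?_ (le_ciSup (hbddD w) X)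
    gcongr
    linarith [norm_le_eunorm3 X]
  have hFeq : F = fun η => ∑' p, wignerTerm K (fun p i => ((p.1 i + p.2 i : ℤ) : ℝ)) ψ η p :=
    funext hF
  subst hFeq hA
  refine ⟨fun η _ => summable_norm_wignerTerm ψ hS hsum η,
    fun η hη => (hasDerivAt_tsum_wignerTerm ψ hK hS hsum hD hsumD hη).differentiableAt,
    fun η hη => ?_⟩
  rw [(hasDerivAt_tsum_wignerTerm ψ hK hS hsum hD hsumD hη).deriv]
  exact norm_tsum_wignerTermDeriv_le ψ hD hsumD hη
end

section
/- Let h : ℝ³ → ℂ and S : ℝ³ → ℝ be Schwartz functions, and for η > 0 define the WKB state φ^{(η)} ∈ ℓ²(ℤ³) by φ^{(η)}(x) = η^{3/2} · h(ηx) · exp(i·S(ηx)/η) for x ∈ ℤ³. Then there is a constant C < ∞, depending only on h and S, such that the map η ↦ φ^{(η)} from (0,1] to ℓ²(ℤ³) is differentiable and ‖(d/dη) φ^{(η)}‖_{ℓ²(ℤ³)} ≤ C/η² for all η ∈ (0,1]. -/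
/-!
Differentiating `η^{3/2} h(ηx) e^{iS(ηx)/η}` in `η` produces, at the lattice point `x`, terms
`η^{-1/2}` times `h(y)`, `|y| Dh(y)` and `h(y) (|y| DS(y) + S(y))` evaluated at `y = ηx`; the
Schwartz bounds dominate all of them by `(1 + |y|)^{-6}`. The lattice sum of `(1 + |ηx|)^{-6}` over
`ℤ³` is `O(η^{-3})` (compare with a product of three one-dimensional sums `O(1/η)`), so the square
of the `ℓ²` norm of the derivative is `O(η^{-1} η^{-3})`. The same summable domination, uniform for
`η` in a neighbourhood, lets one differentiate the series `∑ₓ φ^{(η)}(x) δₓ` term by term.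
-/

open MeasureTheory Real
open scoped SchwartzMap

theorem sum_range_succ_inv_one_add_mul_sq_le {c : ℝ} (hc : 0 < c) (n : ℕ) :
    ∑ k ∈ Finset.range (n + 1), ((1 + c * k) ^ 2)⁻¹ ≤ 1 + 1 / c - 1 / (c * (1 + c * n)) := by
  induction n with
  | zero => simp
  | succ n ih =>
    rw [Finset.sum_range_succ]
    have hn1 : 0 < 1 + c * (n + 1) := by positivity
    -- `((1 + c (n+1))²)⁻¹ ≤ ((1 + c n) (1 + c (n+1)))⁻¹`, which telescopes
    have step : ((1 + c * ↑(n + 1)) ^ 2)⁻¹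
        ≤ 1 / (c * (1 + c * n)) - 1 / (c * (1 + c * ↑(n + 1))) := by
      push_cast
      rw [div_sub_div _ _ (by positivity) (by positivity), ← one_div,
        div_le_div_iff₀ (by positivity) (by positivity)]
      nlinarith [mul_pos (pow_pos hc 3) hn1]
    linarith

theorem summable_and_tsum_inv_one_add_mul_sq_le {c : ℝ} (hc : 0 < c) :
    Summable (fun n : ℕ => ((1 + c * n) ^ 2)⁻¹) ∧
      ∑' n : ℕ, ((1 + c * n) ^ 2)⁻¹ ≤ 1 + 1 / c := by
  have hbound : ∀ n, ∑ k ∈ Finset.range n, ((1 + c * k) ^ 2)⁻¹ ≤ 1 + 1 / c := by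
    rintro (_ | n)
    · simp only [Finset.range_zero, Finset.sum_empty]
      positivity
    · have := sum_range_succ_inv_one_add_mul_sq_le hc n
      have : 0 ≤ 1 / (c * (1 + c * n)) := by positivity
      linarith
  exact ⟨summable_of_sum_range_le (fun _ => by positivity) hbound,
    Real.tsum_le_of_sum_range_le (fun _ => by positivity) hbound⟩

theorem summable_and_tsum_inv_one_add_abs_mul_sq_le {c : ℝ} (hc : 0 < c) :
    Summable (fun n : ℤ => ((1 + |c * n|) ^ 2)⁻¹) ∧
      ∑' n : ℤ, ((1 + |c * n|) ^ 2)⁻¹ ≤ 1 + 2 / c := by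
  obtain ⟨hsum, hle⟩ := summable_and_tsum_inv_one_add_mul_sq_le hc
  have habs : ∀ n : ℕ, |c * (n : ℤ)| = c * n := fun n => by
    rw [Int.cast_natCast, abs_of_nonneg (by positivity)]
  have habs' : ∀ n : ℕ, |c * ((-n : ℤ) : ℝ)| = c * n := fun n => by
    rw [Int.cast_neg, mul_neg, abs_neg, Int.cast_natCast, abs_of_nonneg (by positivity)]
  have hZ := HasSum.of_nat_of_neg (f := fun n : ℤ => ((1 + |c * n|) ^ 2)⁻¹)
    (by simpa only [habs] using hsum.hasSum) (by simpa only [habs'] using hsum.hasSum)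
  refine ⟨hZ.summable, ?_⟩
  rw [hZ.tsum_eq]
  simp only [Int.cast_zero, mul_zero, abs_zero, add_zero, one_pow, inv_one]
  have : 1 + 2 / c = 2 * (1 + 1 / c) - 1 := by ring
  linarith

theorem hasSum_pi_prod_of_nonneg {ι : Type*} {f : ι → ℝ} {s : ℝ} (hf : HasSum f s)
    (hf0 : ∀ i, 0 ≤ f i) (d : ℕ) : HasSum (fun x : Fin d → ι => ∏ i, f (x i)) (s ^ d) := by
  induction d with
  | zero =>
    simp only [Finset.univ_eq_empty, Finset.prod_empty, pow_zero]
    convert hasSum_fintype (fun _ : Fin 0 → ι => (1 : ℝ))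
    simp
  | succ d ih =>
    set g : (Fin d → ι) → ℝ := fun x => ∏ i, f (x i)
    have hsum : Summable fun x : ι × (Fin d → ι) => f x.1 * g x.2 :=
      hf.summable.mul_of_nonneg ih.summable hf0 fun x => Finset.prod_nonneg fun i _ => hf0 (x i)
    have key : HasSum (fun x : ι × (Fin d → ι) => f x.1 * g x.2) (s * s ^ d) := hf.mul ih hsum
    rw [pow_succ', ← (Fin.consEquiv fun _ => ι).hasSum_iff]
    refine key.congr_fun fun x => ?_
    simp [g, Fin.prod_univ_succ]

theorem inv_one_add_norm_pow_le_prod {d : ℕ} (y : Fin d → ℝ) :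
    ((1 + ‖y‖) ^ (2 * d))⁻¹ ≤ ∏ i, ((1 + |y i|) ^ 2)⁻¹ := by
  rw [Finset.prod_inv_distrib]
  refine inv_anti₀ (Finset.prod_pos fun i _ => by positivity) ?_
  calc ∏ i, (1 + |y i|) ^ 2 ≤ ∏ _i : Fin d, (1 + ‖y‖) ^ 2 :=
        Finset.prod_le_prod (fun i _ => by positivity) fun i _ => by
          gcongr; exact norm_le_pi_norm y i
    _ = (1 + ‖y‖) ^ (2 * d) := by simp [pow_mul]

section LatticeWeight

variable {d : ℕ}

noncomputable def latticeWeight (c : ℝ) (x : Fin d → ℤ) : ℝ :=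
  ((1 + ‖fun i => c * (x i : ℝ)‖) ^ (2 * d))⁻¹

theorem latticeWeight_pos (c : ℝ) (x : Fin d → ℤ) : 0 < latticeWeight c x := by
  unfold latticeWeight; positivity

theorem latticeWeight_le_one (c : ℝ) (x : Fin d → ℤ) : latticeWeight c x ≤ 1 :=
  inv_le_one_of_one_le₀ (one_le_pow₀ (le_add_of_nonneg_right (norm_nonneg _)))

theorem latticeWeight_anti {c t : ℝ} (hc : 0 ≤ c) (hct : c ≤ t) (x : Fin d → ℤ) :
    latticeWeight t x ≤ latticeWeight c x := by
  refine inv_anti₀ (by positivity) (pow_le_pow_left₀ (by positivity) ?_ _)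
  have hsmul : ∀ s : ℝ, (fun i => s * (x i : ℝ)) = s • fun i => (x i : ℝ) := fun _ => rfl
  rw [hsmul, hsmul, norm_smul, norm_smul, Real.norm_of_nonneg hc,
    Real.norm_of_nonneg (hc.trans hct)]
  gcongr

theorem summable_and_tsum_latticeWeight_le {c : ℝ} (hc : 0 < c) :
    Summable (latticeWeight (d := d) c) ∧ ∑' x, latticeWeight (d := d) c x ≤ (1 + 2 / c) ^ d := by
  obtain ⟨hsum, hle⟩ := summable_and_tsum_inv_one_add_abs_mul_sq_le hc
  have hprod := hasSum_pi_prod_of_nonneg hsum.hasSum (fun n => by positivity) d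
  have hdom : ∀ x : Fin d → ℤ, latticeWeight c x ≤ ∏ i, ((1 + |c * (x i : ℝ)|) ^ 2)⁻¹ :=
    fun x => inv_one_add_norm_pow_le_prod _
  have hsum' := hprod.summable.of_nonneg_of_le (fun x => (latticeWeight_pos c x).le) hdom
  refine ⟨hsum', ?_⟩
  calc ∑' x, latticeWeight c x ≤ (∑' n : ℤ, ((1 + |c * n|) ^ 2)⁻¹) ^ d :=
        hprod.tsum_eq ▸ hsum'.tsum_le_tsum hdom hprod.summable
    _ ≤ (1 + 2 / c) ^ d := by gcongr

end LatticeWeight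

theorem sq_le_sq_mul_of_le_mul {a w A : ℝ} (ha : 0 ≤ a) (hw0 : 0 ≤ w) (hw1 : w ≤ 1)
    (h : a ≤ A * w) : a ^ 2 ≤ A ^ 2 * w :=
  calc a ^ 2 ≤ (A * w) ^ 2 := pow_le_pow_left₀ ha h 2
    _ = A ^ 2 * (w * w) := by ring
    _ ≤ A ^ 2 * w := by gcongr; exact mul_le_of_le_one_left hw0 hw1

section WeightedL2

variable {ι : Type*} {E : ι → Type*} [∀ i, NormedAddCommGroup (E i)]

theorem memℓp_two_of_norm_le_mul {f : ∀ i, E i} {w : ι → ℝ} {A : ℝ} (hw : Summable w)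
    (hw0 : ∀ i, 0 ≤ w i) (hw1 : ∀ i, w i ≤ 1) (hf : ∀ i, ‖f i‖ ≤ A * w i) : Memℓp f 2 := by
  refine memℓp_gen ((hw.mul_left (A ^ 2)).of_nonneg_of_le (fun i => by positivity) fun i => ?_)
  rw [ENNReal.toReal_ofNat, Real.rpow_two]
  exact sq_le_sq_mul_of_le_mul (norm_nonneg _) (hw0 i) (hw1 i) (hf i)

theorem lp.norm_sq_le_of_norm_le_mul (f : lp E 2) {w : ι → ℝ} {A : ℝ} (hw : Summable w)
    (hw0 : ∀ i, 0 ≤ w i) (hw1 : ∀ i, w i ≤ 1) (hf : ∀ i, ‖f i‖ ≤ A * w i) :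
    ‖f‖ ^ 2 ≤ A ^ 2 * ∑' i, w i := by
  have hnorm := lp.hasSum_norm (p := 2) (by norm_num) f
  simp only [ENNReal.toReal_ofNat, Real.rpow_two] at hnorm
  rw [← hnorm.tsum_eq, ← tsum_mul_left]
  exact hnorm.summable.tsum_le_tsum
    (fun i => sq_le_sq_mul_of_le_mul (norm_nonneg _) (hw0 i) (hw1 i) (hf i)) (hw.mul_left _)

end WeightedL2

theorem lp.hasDerivAt_of_hasDerivAt_apply {𝕜 ι : Type*} [RCLike 𝕜] {E : ι → Type*}
    [∀ i, NormedAddCommGroup (E i)] [∀ i, NormedSpace 𝕜 (E i)] [∀ i, CompleteSpace (E i)]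
    {p : ENNReal} [Fact (1 ≤ p)] (hp : p ≠ ⊤) {φ : 𝕜 → lp E p} {φ' : lp E p}
    {D : ∀ i, 𝕜 → E i} {u : ι → ℝ} {s : Set 𝕜} {z : 𝕜} (hu : Summable u) (hs : IsOpen s)
    (hs' : IsPreconnected s) (hz : z ∈ s)
    (hφ : ∀ i, ∀ t ∈ s, HasDerivAt (fun t => φ t i) (D i t) t)
    (hD : ∀ i, ∀ t ∈ s, ‖D i t‖ ≤ u i) (hφ' : ∀ i, φ' i = D i z) : HasDerivAt φ φ' z := by
  classical
  have key := hasDerivAt_tsum_of_isPreconnected (g := fun i t => lp.single p i (φ t i))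
    (g' := fun i t => lp.single p i (D i t)) hu hs hs'
    (fun i t ht => (lp.singleContinuousLinearMap 𝕜 E p i).hasFDerivAt.comp_hasDerivAt t
      (hφ i t ht))
    (fun i t ht => by
      rw [lp.norm_single (zero_lt_one.trans_le Fact.out)]; exact hD i t ht)
    hz (lp.hasSum_single hp (φ z)).summable hz
  simpa only [← hφ', (lp.hasSum_single hp _).tsum_eq] using key

theorem SchwartzMap.exists_one_add_norm_pow_mul_le {E F : Type*} [NormedAddCommGroup E]
    [NormedSpace ℝ E] [NormedAddCommGroup F] [NormedSpace ℝ F] (f : 𝓢(E, F)) (k : ℕ) :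
    ∃ M, ∀ y, (1 + ‖y‖) ^ k * ‖f y‖ ≤ M ∧ (1 + ‖y‖) ^ k * ‖fderiv ℝ f y‖ ≤ M := by
  refine ⟨2 ^ k * (Finset.Iic (k, 1)).sup (fun m => SchwartzMap.seminorm ℝ m.1 m.2) f,
    fun y => ⟨?_, ?_⟩⟩
  · simpa using one_add_le_sup_seminorm_apply (m := (k, 1)) le_rfl (Nat.zero_le _) f y
  · simpa [norm_iteratedFDeriv_one] using
      one_add_le_sup_seminorm_apply (m := (k, 1)) le_rfl le_rfl f y

theorem norm_exp_I_mul_ofReal_div (a b : ℝ) :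
    ‖Complex.exp (Complex.I * (a : ℂ) / (b : ℂ))‖ = 1 := by
  rw [mul_div_assoc, ← Complex.ofReal_div, mul_comm, Complex.norm_exp_ofReal_mul_I]

section WKB

variable {E : Type*} [NormedAddCommGroup E] [NormedSpace ℝ E] (h : 𝓢(E, ℂ)) (S : 𝓢(E, ℝ))

noncomputable def wkb (η : ℝ) (v : E) : ℂ :=
  ((η ^ ((3 : ℝ) / 2) : ℝ) : ℂ) * h (η • v) *
    Complex.exp (Complex.I * ((S (η • v) : ℝ) : ℂ) / (η : ℂ))

noncomputable def wkbDeriv (η : ℝ) (v : E) : ℂ :=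
  ((η ^ ((3 : ℝ) / 2) : ℝ) : ℂ) * Complex.exp (Complex.I * ((S (η • v) : ℝ) : ℂ) / (η : ℂ)) *
    (3 / (2 * η) * h (η • v) + fderiv ℝ h (η • v) v +
      Complex.I * h (η • v) * ((fderiv ℝ S (η • v) v : ℂ) / η - (S (η • v) : ℂ) / η ^ 2))

noncomputable def wkbEnvelope (y : E) : ℝ :=
  3 * ‖h y‖ + 2 * ‖y‖ * ‖fderiv ℝ h y‖ + ‖h y‖ * (‖y‖ * ‖fderiv ℝ S y‖ + ‖S y‖)

theorem hasDerivAt_wkb (v : E) {η : ℝ} (hη : 0 < η) :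
    HasDerivAt (fun t => wkb h S t v) (wkbDeriv h S η v) η := by
  have hray : HasDerivAt (fun t : ℝ => t • v) v η := by
    simpa using (hasDerivAt_id η).smul_const v
  have hpow : HasDerivAt (fun t : ℝ => ((t ^ ((3 : ℝ) / 2) : ℝ) : ℂ))
      (((3 / 2 * η ^ ((3 : ℝ) / 2 - 1) : ℝ)) : ℂ) η :=
    (Real.hasDerivAt_rpow_const (Or.inl hη.ne')).ofReal_comp
  have hh : HasDerivAt (fun t : ℝ => h (t • v)) (fderiv ℝ h (η • v) v) η :=
    h.differentiableAt.hasFDerivAt.comp_hasDerivAt η hray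
  have hS : HasDerivAt (fun t : ℝ => ((S (t • v) : ℝ) : ℂ)) (fderiv ℝ S (η • v) v : ℂ) η :=
    (S.differentiableAt.hasFDerivAt.comp_hasDerivAt η hray).ofReal_comp
  have hη' : (η : ℂ) ≠ 0 := by exact_mod_cast hη.ne'
  have hphase := ((hS.const_mul Complex.I).div (hasDerivAt_id η).ofReal_comp hη').cexp
  refine ((hpow.mul hh).mul hphase).congr_deriv ?_
  rw [Real.rpow_sub_one hη.ne']
  simp only [wkbDeriv, id, Pi.mul_apply, Pi.div_apply]
  push_cast
  field_simp

theorem norm_wkb (v : E) {η : ℝ} (hη : 0 < η) :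
    ‖wkb h S η v‖ = η ^ ((3 : ℝ) / 2) * ‖h (η • v)‖ := by
  rw [wkb, norm_mul, norm_mul, norm_exp_I_mul_ofReal_div, mul_one, Complex.norm_real,
    Real.norm_of_nonneg (by positivity)]

theorem norm_wkbDeriv_le (v : E) {η : ℝ} (hη : 0 < η) (hη2 : η ≤ 2) :
    ‖wkbDeriv h S η v‖ ≤ wkbEnvelope h S (η • v) / √η := by
  have hscale : η ^ ((3 : ℝ) / 2) * √η = η ^ 2 := by
    rw [Real.sqrt_eq_rpow, ← Real.rpow_add hη]; norm_num
  rw [wkbDeriv, norm_mul, norm_mul, norm_exp_I_mul_ofReal_div, mul_one, Complex.norm_real,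
    Real.norm_of_nonneg (by positivity), le_div_iff₀ (by positivity), mul_right_comm, hscale]
  set y := η • v
  have hy : η * ‖v‖ = ‖y‖ := by rw [norm_smul, Real.norm_of_nonneg hη.le]
  have hdh : ‖fderiv ℝ h y v‖ ≤ ‖fderiv ℝ h y‖ * ‖v‖ := (fderiv ℝ h y).le_opNorm v
  have hdS : ‖fderiv ℝ S y v‖ ≤ ‖fderiv ℝ S y‖ * ‖v‖ := (fderiv ℝ S y).le_opNorm v
  have hη' : ‖(η : ℂ)‖ = η := by rw [Complex.norm_real, Real.norm_of_nonneg hη.le]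
  calc η ^ 2 * ‖3 / (2 * (η : ℂ)) * h y + fderiv ℝ h y v +
        Complex.I * h y * ((fderiv ℝ S y v : ℂ) / η - (S y : ℂ) / η ^ 2)‖
      ≤ η ^ 2 * (3 / (2 * η) * ‖h y‖ + ‖fderiv ℝ h y‖ * ‖v‖ +
          ‖h y‖ * (‖fderiv ℝ S y‖ * ‖v‖ / η + ‖S y‖ / η ^ 2)) := by
        gcongr
        refine (norm_add₃_le ..).trans (add_le_add_three ?_ hdh ?_)
        · simp [abs_of_pos hη]
        · rw [norm_mul, norm_mul, Complex.norm_I, one_mul]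
          gcongr
          refine (norm_sub_le _ _).trans (add_le_add ?_ ?_)
          · rw [norm_div, hη', Complex.norm_real]
            gcongr
          · rw [norm_div, norm_pow, hη', Complex.norm_real]
    _ = 3 * η / 2 * ‖h y‖ + η * ‖fderiv ℝ h y‖ * (η * ‖v‖) +
          ‖h y‖ * (‖fderiv ℝ S y‖ * (η * ‖v‖) + ‖S y‖) := by
        field_simp
    _ ≤ wkbEnvelope h S y := by
        rw [hy, wkbEnvelope]
        have hb := mul_nonneg (norm_nonneg (fderiv ℝ h y)) (norm_nonneg y)
        nlinarith [mul_le_mul_of_nonneg_right hη2 (norm_nonneg (h y)),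
          mul_le_mul_of_nonneg_right hη2 hb]

theorem exists_wkbEnvelope_le :
    ∃ K, 0 ≤ K ∧ ∀ y : E, wkbEnvelope h S y ≤ K * ((1 + ‖y‖) ^ 6)⁻¹ := by
  obtain ⟨Mh, hMh⟩ := h.exists_one_add_norm_pow_mul_le 7
  obtain ⟨MS, hMS⟩ := S.exists_one_add_norm_pow_mul_le 1
  have hMh0 : 0 ≤ Mh := (by positivity : (0 : ℝ) ≤ _).trans (hMh 0).1
  have hMS0 : 0 ≤ MS := (by positivity : (0 : ℝ) ≤ _).trans (hMS 0).1
  refine ⟨Mh * (5 + 2 * MS), by positivity, fun y => ?_⟩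
  obtain ⟨hh, hdh⟩ := hMh y
  obtain ⟨hS, hdS⟩ := hMS y
  set r := ‖y‖
  have hr : 0 ≤ r := norm_nonneg y
  have hpow : (1 + r) ^ 6 ≤ (1 + r) ^ 7 := pow_le_pow_right₀ (by linarith) (by norm_num)
  have ha : (1 + r) ^ 6 * ‖h y‖ ≤ Mh :=
    (mul_le_mul_of_nonneg_right hpow (norm_nonneg _)).trans hh
  have hb : (1 + r) ^ 6 * (r * ‖fderiv ℝ h y‖) ≤ Mh :=
    calc (1 + r) ^ 6 * (r * ‖fderiv ℝ h y‖) ≤ (1 + r) ^ 6 * ((1 + r) * ‖fderiv ℝ h y‖) := by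
          gcongr; linarith
      _ = (1 + r) ^ 7 * ‖fderiv ℝ h y‖ := by ring
      _ ≤ Mh := hdh
  have hphase : r * ‖fderiv ℝ S y‖ + ‖S y‖ ≤ 2 * MS := by
    rw [pow_one] at hS hdS
    nlinarith [norm_nonneg (S y), norm_nonneg (fderiv ℝ S y)]
  have hphase0 : 0 ≤ r * ‖fderiv ℝ S y‖ + ‖S y‖ := by positivity
  rw [le_mul_inv_iff₀ (by positivity), wkbEnvelope]
  nlinarith [mul_le_mul ha hphase hphase0 hMh0]

theorem exists_norm_wkbDeriv_le :
    ∃ K, 0 ≤ K ∧ ∀ (v : E) (η : ℝ), 0 < η → η ≤ 2 →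
      ‖wkbDeriv h S η v‖ ≤ K / √η * ((1 + ‖η • v‖) ^ 6)⁻¹ := by
  obtain ⟨K, hK0, hK⟩ := exists_wkbEnvelope_le h S
  refine ⟨K, hK0, fun v η hη hη2 => (norm_wkbDeriv_le h S v hη hη2).trans ?_⟩
  rw [div_mul_eq_mul_div]
  gcongr
  exact hK _

end WKB

section WKBState

variable (h : 𝓢(Fin 3 → ℝ, ℂ)) (S : 𝓢(Fin 3 → ℝ, ℝ))

theorem memℓp_wkb {η : ℝ} (hη : 0 < η) :
    Memℓp (fun x : Fin 3 → ℤ => wkb h S η fun i => (x i : ℝ)) 2 := by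
  obtain ⟨M, hM⟩ := h.exists_one_add_norm_pow_mul_le 6
  refine memℓp_two_of_norm_le_mul (A := η ^ ((3 : ℝ) / 2) * M)
    (summable_and_tsum_latticeWeight_le hη).1 (fun x => (latticeWeight_pos η x).le)
    (latticeWeight_le_one η) fun x => ?_
  rw [norm_wkb h S _ hη, mul_assoc]
  gcongr
  exact (le_mul_inv_iff₀ (by positivity)).2 (by rw [mul_comm]; exact (hM _).1)

noncomputable def wkbState (η : ℝ) : lp (fun _ : Fin 3 → ℤ => ℂ) 2 :=
  if hη : 0 < η then ⟨_, memℓp_wkb h S hη⟩ else 0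

theorem wkbState_apply {η : ℝ} (hη : 0 < η) (x : Fin 3 → ℤ) :
    wkbState h S η x = wkb h S η fun i => (x i : ℝ) := by
  rw [wkbState, dif_pos hη]

theorem exists_hasDerivAt_wkbState {η : ℝ} (hη : 0 < η) (hη2 : η < 2) :
    ∃ D : lp (fun _ : Fin 3 → ℤ => ℂ) 2, HasDerivAt (wkbState h S) D η ∧
      ∀ x, D x = wkbDeriv h S η fun i => (x i : ℝ) := by
  obtain ⟨K, hK0, hK⟩ := exists_norm_wkbDeriv_le h S
  have hsum := (summable_and_tsum_latticeWeight_le (d := 3) (half_pos hη)).1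
  have hbound : ∀ x : Fin 3 → ℤ, ∀ t ∈ Set.Ioo (η / 2) 2,
      ‖wkbDeriv h S t fun i => (x i : ℝ)‖ ≤ K / √(η / 2) * latticeWeight (η / 2) x := by
    rintro x t ⟨ht, ht2⟩
    have ht0 : 0 < t := (half_pos hη).trans ht
    refine (hK _ t ht0 ht2.le).trans (mul_le_mul ?_ (latticeWeight_anti (half_pos hη).le ht.le x)
      (latticeWeight_pos t x).le (by positivity))
    exact div_le_div_of_nonneg_left hK0 (Real.sqrt_pos.2 (half_pos hη)) (Real.sqrt_le_sqrt ht.le)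
  have hηs : η ∈ Set.Ioo (η / 2) 2 := ⟨half_lt_self hη, hη2⟩
  have hD := memℓp_two_of_norm_le_mul hsum (fun x => (latticeWeight_pos _ x).le)
    (latticeWeight_le_one _) fun x => hbound x η hηs
  refine ⟨⟨_, hD⟩, lp.hasDerivAt_of_hasDerivAt_apply (by norm_num) (hsum.mul_left _) isOpen_Ioo
    isPreconnected_Ioo hηs (fun x t ht => ?_) hbound fun x => rfl, fun x => rfl⟩
  have ht0 : 0 < t := (half_pos hη).trans ht.1
  refine (hasDerivAt_wkb h S _ ht0).congr_of_eventuallyEq ?_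
  filter_upwards [Ioi_mem_nhds ht0] with s hs
  exact wkbState_apply h S hs x

theorem exists_norm_le_of_apply_eq_wkbDeriv :
    ∃ C, ∀ η, 0 < η → η ≤ 1 → ∀ D : lp (fun _ : Fin 3 → ℤ => ℂ) 2,
      (∀ x, D x = wkbDeriv h S η fun i => (x i : ℝ)) → ‖D‖ ≤ C / η ^ 2 := by
  obtain ⟨K, hK0, hK⟩ := exists_norm_wkbDeriv_le h S
  refine ⟨6 * K, fun η hη hη1 D hD => ?_⟩
  obtain ⟨hsum, htsum⟩ := summable_and_tsum_latticeWeight_le (d := 3) hη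
  have hsq := lp.norm_sq_le_of_norm_le_mul D hsum (fun x => (latticeWeight_pos η x).le)
    (latticeWeight_le_one η) fun x => (hD x).symm ▸ hK _ η hη (by linarith)
  have h3 : 1 + 2 / η ≤ 3 / η := by
    rw [le_div_iff₀ hη, add_mul, div_mul_cancel₀ _ hη.ne']
    linarith
  refine (pow_le_pow_iff_left₀ (norm_nonneg D) (by positivity) two_ne_zero).1 ?_
  calc ‖D‖ ^ 2 ≤ (K / √η) ^ 2 * (1 + 2 / η) ^ 3 :=
        hsq.trans (mul_le_mul_of_nonneg_left htsum (sq_nonneg _))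
    _ ≤ (K / √η) ^ 2 * (3 / η) ^ 3 := by gcongr
    _ = 27 * K ^ 2 / η ^ 4 := by
      rw [div_pow, Real.sq_sqrt hη.le]
      field_simp
      ring
    _ ≤ (6 * K / η ^ 2) ^ 2 := by
      rw [div_pow, ← pow_mul]
      gcongr
      nlinarith [sq_nonneg K]

end WKBState

theorem wkb_state_eta_derivative_bound
    (h : SchwartzMap (Fin 3 → ℝ) ℂ) (S : SchwartzMap (Fin 3 → ℝ) ℝ) :
    ∃ C : ℝ, ∃ φ : ℝ → lp (fun _ : Fin 3 → ℤ => ℂ) 2,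
      (∀ η : ℝ, 0 < η → ∀ x : Fin 3 → ℤ,
        φ η x = ((η ^ ((3 : ℝ) / 2) : ℝ) : ℂ) * h (fun i => η * (x i : ℝ)) *
          Complex.exp (Complex.I * ((S (fun i => η * (x i : ℝ)) : ℝ) : ℂ) / (η : ℂ))) ∧
      (∀ η : ℝ, 0 < η → η ≤ 1 →
        ∃ D : lp (fun _ : Fin 3 → ℤ => ℂ) 2, HasDerivAt φ D η ∧ ‖D‖ ≤ C / η ^ 2) := by
  obtain ⟨C, hC⟩ := exists_norm_le_of_apply_eq_wkbDeriv h S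
  refine ⟨C, wkbState h S, fun η hη x => wkbState_apply h S hη x, fun η hη hη1 => ?_⟩
  obtain ⟨D, hD, hDx⟩ := exists_hasDerivAt_wkbState h S hη (by linarith)
  exact ⟨D, hD, hC η hη hη1 D hDx⟩
end

section
/- There exists a constant C < ∞ such that for every unit vector n = (n₁, n₂) ∈ ℝ² and every δ with 0 < δ ≤ 1/3, the two-dimensional Lebesgue measure of the set {u ∈ [0,1)² : |n₁·sin(2π(u₁ + u₂)) + n₂·sin(2π(u₁ − u₂))| < δ} is at most C·δ·|log δ|. -/
open MeasureTheory Real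

/-!
Slice by `b = u 1`. As a function of `x = u 0` the expression is `R sin (2πx + φ)` with
`R² = 1 + 2 n₀ n₁ cos (4πb)`, hence `R ≥ |sin (4πb)| / 2`, so by Jordan's inequality the
slice has measure `O(min 1 (δ / |sin (4πb)|))`. Near a quarter-integer `m / 4` we have
`|sin (4πb)| ≥ 8 |b - m / 4|`, and `∫ min 1 (ε / |s|)` over `[-L, L]` is at most
`2ε (1 + log (L / ε))`; five such windows cover `[0, 1)`, which gives `O(δ |log δ|)`.
-/

open Set
open scoped ENNReal

theorem two_mul_abs_sub_le_abs_sin_pi_mul {y : ℝ} {k : ℤ} (h : |y - k| ≤ 1 / 2) :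
    2 * |y - k| ≤ |sin (π * y)| := by
  have hk : |π * (y - k)| ≤ π / 2 := by
    rw [abs_mul, abs_of_pos pi_pos]; nlinarith [pi_pos]
  have hsin : sin (π * (y - k)) = (-1) ^ k * sin (π * y) := by
    rw [mul_sub, mul_comm π (k : ℝ)]; exact sin_sub_int_mul_pi _ _
  have := mul_abs_le_abs_sin hk
  rwa [hsin, abs_mul ((-1 : ℝ) ^ k), abs_neg_one_zpow, one_mul, abs_mul, abs_of_pos pi_pos,
    ← mul_assoc, div_mul_cancel₀ _ pi_ne_zero] at this

theorem volume_abs_sin_lt_le (φ t : ℝ) :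
    volume {x ∈ Ico (0 : ℝ) 1 | |sin (2 * π * x + φ)| < t} ≤ ENNReal.ofReal (3 / 2 * t) := by
  -- `2x + φ / π` ranges over `[φ / π, φ / π + 2)`, so its nearest integer lies in `[k₀, k₀ + 3)`
  set k₀ : ℤ := ⌈φ / π - 1 / 2⌉
  have hcover : {x ∈ Ico (0 : ℝ) 1 | |sin (2 * π * x + φ)| < t} ⊆
      ⋃ k ∈ Finset.Ico k₀ (k₀ + 3), Metric.ball ((k - φ / π) / 2) (t / 4) := by
    rintro x ⟨⟨hx0, hx1⟩, hxt⟩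
    set y := 2 * x + φ / π
    have hy : 2 * π * x + φ = π * y := by simp only [y]; field_simp
    have hround := abs_sub_round y
    have hk := two_mul_abs_sub_le_abs_sin_pi_mul hround
    rw [← hy] at hk
    obtain ⟨hlo, hhi⟩ := abs_le.1 hround
    refine mem_biUnion (x := round y) (Finset.mem_Ico.2 ⟨?_, ?_⟩) ?_
    · exact Int.ceil_le.2 (by linarith)
    · have := Int.le_ceil (φ / π - 1 / 2)
      have : (round y : ℝ) < k₀ + 3 := by linarith
      exact_mod_cast this
    · rw [Metric.mem_ball, Real.dist_eq,
        show x - (round y - φ / π) / 2 = (y - round y) / 2 by simp only [y]; ring, abs_div,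
        abs_two]
      linarith
  calc _ ≤ volume (⋃ k ∈ Finset.Ico k₀ (k₀ + 3), Metric.ball ((k - φ / π) / 2) (t / 4)) :=
        measure_mono hcover
    _ ≤ ∑ k ∈ Finset.Ico k₀ (k₀ + 3), volume (Metric.ball ((k - φ / π) / 2) (t / 4)) :=
        measure_biUnion_finset_le _ _
    _ = 3 * ENNReal.ofReal (2 * (t / 4)) := by simp [Real.volume_ball]
    _ = ENNReal.ofReal (3 / 2 * t) := by
        rw [← ENNReal.ofReal_ofNat 3, ← ENNReal.ofReal_mul (by norm_num)]; ring_nf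

theorem exists_mul_sin_add_mul_cos_eq (A B : ℝ) :
    ∃ φ, ∀ θ, A * sin θ + B * cos θ = √(A ^ 2 + B ^ 2) * sin (θ + φ) := by
  set z : ℂ := ⟨A, B⟩
  have hz : ‖z‖ = √(A ^ 2 + B ^ 2) := by
    rw [Complex.norm_def, Complex.normSq_apply, ← sq, ← sq]
  refine ⟨Complex.arg z, fun θ => ?_⟩
  have hA := Complex.norm_mul_cos_arg z
  have hB := Complex.norm_mul_sin_arg z
  rw [hz] at hA hB
  rw [sin_add]
  linear_combination (-sin θ) * hA - cos θ * hB

theorem abs_sin_two_mul_div_two_le_sqrt {n₀ n₁ : ℝ} (hn : n₀ ^ 2 + n₁ ^ 2 = 1) (c : ℝ) :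
    |sin (2 * c)| / 2 ≤ √(((n₀ + n₁) * cos c) ^ 2 + ((n₀ - n₁) * sin c) ^ 2) := by
  apply Real.le_sqrt_of_sq_le
  have hsc := sin_sq_add_cos_sq c
  rw [div_pow, sq_abs, sin_two_mul]
  have hsum : (n₀ + n₁) ^ 2 + (n₀ - n₁) ^ 2 = 2 := by linear_combination 2 * hn
  rcases le_total 1 ((n₀ + n₁) ^ 2) with h | h
  · nlinarith [sq_nonneg (sin c), sq_nonneg (cos c), sq_nonneg ((n₀ - n₁) * sin c)]
  · nlinarith [sq_nonneg (sin c), sq_nonneg (cos c), sq_nonneg ((n₀ + n₁) * cos c)]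

theorem volume_abs_sin_add_sin_sub_lt_le {n₀ n₁ : ℝ} (hn : n₀ ^ 2 + n₁ ^ 2 = 1) {δ : ℝ}
    (hδ : 0 < δ) (b : ℝ) :
    volume {x ∈ Ico (0 : ℝ) 1 | |n₀ * sin (2 * π * (x + b)) + n₁ * sin (2 * π * (x - b))| < δ}
      ≤ min 1 (ENNReal.ofReal (3 * δ) / ENNReal.ofReal |sin (4 * π * b)|) := by
  refine le_min ((measure_mono (sep_subset _ _)).trans (by simp)) ?_
  set A := (n₀ + n₁) * cos (2 * π * b)
  set B := (n₀ - n₁) * sin (2 * π * b)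
  obtain ⟨φ, hφ⟩ := exists_mul_sin_add_mul_cos_eq A B
  have hR : |sin (4 * π * b)| / 2 ≤ √(A ^ 2 + B ^ 2) := by
    simpa only [← mul_assoc, show (2 : ℝ) * 2 = 4 by norm_num] using
      abs_sin_two_mul_div_two_le_sqrt hn (2 * π * b)
  rcases eq_or_lt_of_le (abs_nonneg (sin (4 * π * b))) with hs | hs
  · rw [← hs, ENNReal.ofReal_zero, ENNReal.div_zero (by simpa using hδ)]
    exact le_top
  have hRpos : 0 < √(A ^ 2 + B ^ 2) := by linarith
  have hset : {x ∈ Ico (0 : ℝ) 1 |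
      |n₀ * sin (2 * π * (x + b)) + n₁ * sin (2 * π * (x - b))| < δ} =
      {x ∈ Ico (0 : ℝ) 1 | |sin (2 * π * x + φ)| < δ / √(A ^ 2 + B ^ 2)} := by
    have hf (x : ℝ) : n₀ * sin (2 * π * (x + b)) + n₁ * sin (2 * π * (x - b)) =
        √(A ^ 2 + B ^ 2) * sin (2 * π * x + φ) := by
      rw [← hφ, mul_add, mul_sub, sin_add, sin_sub]; ring
    simp only [hf, abs_mul, abs_of_pos hRpos, lt_div_iff₀' hRpos]
  rw [hset, ← ENNReal.ofReal_div_of_pos hs]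
  refine (volume_abs_sin_lt_le φ _).trans (ENNReal.ofReal_le_ofReal ?_)
  rw [mul_div_assoc', div_le_div_iff₀ hRpos hs]
  nlinarith

theorem setLIntegral_Icc_min_one_div_abs_le {ε L : ℝ} (hε : 0 < ε) (hεL : ε ≤ L) :
    ∫⁻ s in Icc 0 L, min 1 (ENNReal.ofReal ε / ENNReal.ofReal |s|)
      ≤ ENNReal.ofReal (ε * (1 + log (L / ε))) := by
  have hnear : ∫⁻ s in Icc 0 ε, min 1 (ENNReal.ofReal ε / ENNReal.ofReal |s|)
      ≤ ENNReal.ofReal ε :=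
    (setLIntegral_mono' measurableSet_Icc fun _ _ => min_le_left _ _).trans (by simp)
  have hint : IntegrableOn (fun s => ε * s⁻¹) (Icc ε L) :=
    (continuousOn_const.mul <|
      continuousOn_inv₀.mono fun s hs => (hε.trans_le hs.1).ne').integrableOn_Icc
  have hfar : ∫⁻ s in Icc ε L, min 1 (ENNReal.ofReal ε / ENNReal.ofReal |s|)
      ≤ ENNReal.ofReal (ε * log (L / ε)) := calc
    _ ≤ ∫⁻ s in Icc ε L, ENNReal.ofReal (ε * s⁻¹) := by
      refine setLIntegral_mono' measurableSet_Icc fun s hs => (min_le_right _ _).trans ?_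
      have hs0 : 0 < s := hε.trans_le hs.1
      rw [abs_of_pos hs0, ← ENNReal.ofReal_div_of_pos hs0, div_eq_mul_inv]
    _ = ENNReal.ofReal (∫ s in Icc ε L, ε * s⁻¹) :=
      (ofReal_integral_eq_lintegral_ofReal hint
        ((ae_restrict_iff' measurableSet_Icc).2 (.of_forall fun s hs =>
          (mul_pos hε (inv_pos.2 (hε.trans_le hs.1))).le))).symm
    _ = ENNReal.ofReal (ε * log (L / ε)) := by
      rw [integral_Icc_eq_integral_Ioc, ← intervalIntegral.integral_of_le hεL,
        intervalIntegral.integral_const_mul, integral_inv_of_pos hε (hε.trans_le hεL)]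
  calc _ ≤ _ := by
        rw [← Icc_union_Icc_eq_Icc hε.le hεL]; exact lintegral_union_le _ _ _
    _ ≤ ENNReal.ofReal ε + ENNReal.ofReal (ε * log (L / ε)) := add_le_add hnear hfar
    _ = ENNReal.ofReal (ε * (1 + log (L / ε))) := by
      have hlog : 0 ≤ log (L / ε) := log_nonneg ((one_le_div hε).2 hεL)
      rw [← ENNReal.ofReal_add hε.le (by positivity)]; ring_nf

theorem setLIntegral_Icc_min_one_div_abs_sub_le (c : ℝ) {ε L : ℝ} (hε : 0 < ε) (hεL : ε ≤ L) :
    ∫⁻ s in Icc (c - L) (c + L), min 1 (ENNReal.ofReal ε / ENNReal.ofReal |s - c|)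
      ≤ 2 * ENNReal.ofReal (ε * (1 + log (L / ε))) := by
  set f : ℝ → ℝ≥0∞ := fun s => min 1 (ENNReal.ofReal ε / ENNReal.ofReal |s - c|)
  have hf : Measurable f := by fun_prop
  have hleft : ∫⁻ s in Icc (c - L) c, f s =
      ∫⁻ s in Icc 0 L, min 1 (ENNReal.ofReal ε / ENNReal.ofReal |s|) := by
    rw [← (Measure.measurePreserving_sub_left volume c).setLIntegral_comp_preimage
      measurableSet_Icc hf]
    simp [f, abs_sub_comm]
  have hright : ∫⁻ s in Icc c (c + L), f s =
      ∫⁻ s in Icc 0 L, min 1 (ENNReal.ofReal ε / ENNReal.ofReal |s|) := by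
    rw [← (measurePreserving_add_right volume c).setLIntegral_comp_preimage measurableSet_Icc hf]
    simp [f]
  calc _ ≤ (∫⁻ s in Icc (c - L) c, f s) + ∫⁻ s in Icc c (c + L), f s := by
        rw [← Icc_union_Icc_eq_Icc (show c - L ≤ c by linarith) (show c ≤ c + L by linarith)]
        exact lintegral_union_le _ _ _
    _ ≤ _ := by
      rw [hleft, hright, two_mul]
      exact add_le_add (setLIntegral_Icc_min_one_div_abs_le hε hεL)
        (setLIntegral_Icc_min_one_div_abs_le hε hεL)

theorem min_one_div_abs_sin_le {K : ℝ} (hK : 0 < K) (m : ℕ) {b : ℝ} (hb : |b - m / 4| ≤ 1 / 8) :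
    min 1 (ENNReal.ofReal K / ENNReal.ofReal |sin (4 * π * b)|)
      ≤ min 1 (ENNReal.ofReal (K / 8) / ENNReal.ofReal |b - m / 4|) := by
  have h4 : |4 * b - (m : ℤ)| = 4 * |b - m / 4| := by
    rw [show 4 * b - ((m : ℤ) : ℝ) = 4 * (b - m / 4) by push_cast; ring, abs_mul,
      abs_of_pos four_pos]
  have hsin : 8 * |b - m / 4| ≤ |sin (4 * π * b)| := by
    have := two_mul_abs_sub_le_abs_sin_pi_mul (y := 4 * b) (k := m) (by rw [h4]; linarith)
    rw [h4, mul_left_comm π, ← mul_assoc 4] at this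
    linarith
  refine min_le_min le_rfl ?_
  rcases eq_or_lt_of_le (abs_nonneg (b - m / 4)) with hd | hd
  · rw [← hd, ENNReal.ofReal_zero, ENNReal.div_zero (by simpa using hK)]
    exact le_top
  rw [← ENNReal.ofReal_div_of_pos hd, ← ENNReal.ofReal_div_of_pos (by linarith)]
  refine ENNReal.ofReal_le_ofReal ?_
  rw [div_div, div_le_div_iff_of_pos_left hK (by linarith) (by linarith)]
  linarith

theorem Ico_zero_one_subset_iUnion_Icc :
    Ico (0 : ℝ) 1 ⊆ ⋃ m : Fin 5, Icc ((m : ℕ) / 4 - 1 / 8) ((m : ℕ) / 4 + 1 / 8) := by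
  rintro b ⟨hb0, hb1⟩
  have hlo := Nat.floor_le (show 0 ≤ 4 * b + 1 / 2 by linarith)
  have hhi := Nat.lt_floor_add_one (4 * b + 1 / 2)
  have hm : ⌊4 * b + 1 / 2⌋₊ < 5 := Nat.floor_lt (by linarith) |>.2 (by norm_num; linarith)
  exact mem_iUnion.2 ⟨⟨_, hm⟩, by simp only; constructor <;> linarith⟩

theorem setLIntegral_Ico_min_one_div_abs_sin_le {K : ℝ} (hK : 0 < K) (hK1 : K ≤ 1) :
    ∫⁻ b in Ico (0 : ℝ) 1, min 1 (ENNReal.ofReal K / ENNReal.ofReal |sin (4 * π * b)|)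
      ≤ ENNReal.ofReal (5 / 4 * K * (1 + log (1 / K))) := by
  have hL : (1 / 8 : ℝ) / (K / 8) = 1 / K := by field_simp
  have hwindow (m : ℕ) :
      ∫⁻ b in Icc ((m : ℝ) / 4 - 1 / 8) (m / 4 + 1 / 8),
        min 1 (ENNReal.ofReal K / ENNReal.ofReal |sin (4 * π * b)|)
        ≤ 2 * ENNReal.ofReal (K / 8 * (1 + log (1 / K))) := by
    refine (setLIntegral_mono' measurableSet_Icc fun b hb => min_one_div_abs_sin_le hK m
      (abs_sub_le_iff.2 ⟨by linarith [hb.2], by linarith [hb.1]⟩)).trans ?_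
    rw [← hL]
    exact setLIntegral_Icc_min_one_div_abs_sub_le _ (by positivity) (by linarith)
  calc _ ≤ ∫⁻ b in ⋃ m : Fin 5, Icc (((m : ℕ) : ℝ) / 4 - 1 / 8) ((m : ℕ) / 4 + 1 / 8),
          min 1 (ENNReal.ofReal K / ENNReal.ofReal |sin (4 * π * b)|) :=
        lintegral_mono_set Ico_zero_one_subset_iUnion_Icc
    _ ≤ ∑' m : Fin 5, ∫⁻ b in Icc (((m : ℕ) : ℝ) / 4 - 1 / 8) ((m : ℕ) / 4 + 1 / 8),
          min 1 (ENNReal.ofReal K / ENNReal.ofReal |sin (4 * π * b)|) :=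
        lintegral_iUnion_le _ _
    _ ≤ ∑' _ : Fin 5, 2 * ENNReal.ofReal (K / 8 * (1 + log (1 / K))) :=
        ENNReal.tsum_le_tsum fun m => hwindow m
    _ = ENNReal.ofReal (5 / 4 * K * (1 + log (1 / K))) := by
        rw [tsum_fintype, Finset.sum_const, Finset.card_univ, Fintype.card_fin, nsmul_eq_mul,
          ← mul_assoc, ← ENNReal.ofReal_ofNat 2, ← ENNReal.ofReal_natCast,
          ← ENNReal.ofReal_mul (by norm_num), ← ENNReal.ofReal_mul (by norm_num)]
        ring_nf

theorem volume_eq_lintegral_volume_slice {s : Set (Fin 2 → ℝ)} (hs : MeasurableSet s) :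
    volume s = ∫⁻ b, volume {x | ![x, b] ∈ s} := by
  have he := (volume_preserving_finTwoArrow ℝ).symm
  rw [← he.measure_preimage hs.nullMeasurableSet, Measure.volume_eq_prod,
    Measure.prod_apply_symm (hs.preimage he.measurable)]
  rfl

theorem mul_one_add_log_one_div_three_mul_le {δ : ℝ} (hδ : 0 < δ) (hδ3 : δ ≤ 1 / 3) :
    15 / 4 * δ * (1 + log (1 / (3 * δ))) ≤ 8 * δ * |log δ| := by
  have hlog3 : 1 < log 3 := by
    rw [lt_log_iff_exp_lt (by norm_num)]; linarith [exp_one_lt_d9]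
  have hlogδ : log δ ≤ -log 3 := by
    rw [← log_inv]; exact log_le_log hδ (by linarith)
  rw [abs_of_neg (by linarith), one_div, log_inv, log_mul (by norm_num) hδ.ne']
  nlinarith

theorem jacobian_small_set_measure :
    ∃ C : ℝ, ∀ n : Fin 2 → ℝ, n 0 ^ 2 + n 1 ^ 2 = 1 → ∀ δ : ℝ, 0 < δ → δ ≤ 1 / 3 →
      volume {u ∈ box2 |
          |n 0 * Real.sin (2 * Real.pi * (u 0 + u 1)) +
            n 1 * Real.sin (2 * Real.pi * (u 0 - u 1))| < δ}
        ≤ ENNReal.ofReal (C * δ * |Real.log δ|) := by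
  refine ⟨8, fun n hn δ hδ hδ3 => ?_⟩
  have hbox : MeasurableSet box2 := .univ_pi fun _ => measurableSet_Ico
  have hlt : MeasurableSet {u : Fin 2 → ℝ |
      |n 0 * sin (2 * π * (u 0 + u 1)) + n 1 * sin (2 * π * (u 0 - u 1))| < δ} :=
    measurableSet_lt (by fun_prop) measurable_const
  have hslice (b : ℝ) : volume {x | ![x, b] ∈ {u ∈ box2 |
      |n 0 * sin (2 * π * (u 0 + u 1)) + n 1 * sin (2 * π * (u 0 - u 1))| < δ}} ≤
      (Ico 0 1).indicator
        (fun b => min 1 (ENNReal.ofReal (3 * δ) / ENNReal.ofReal |sin (4 * π * b)|)) b := by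
    by_cases hb : b ∈ Ico (0 : ℝ) 1
    · rw [indicator_of_mem hb]
      convert volume_abs_sin_add_sin_sub_lt_le hn hδ b using 3
      simp_all [box2]
    · rw [indicator_of_notMem hb, ← measure_empty (μ := (volume : Measure ℝ))]
      exact measure_mono fun x hx => hb (hx.1 1 (mem_univ 1))
  refine (volume_eq_lintegral_volume_slice (hbox.inter hlt)).trans_le ?_
  calc _ ≤ ∫⁻ b in Ico 0 1,
          min 1 (ENNReal.ofReal (3 * δ) / ENNReal.ofReal |sin (4 * π * b)|) := by
        rw [← lintegral_indicator measurableSet_Ico]; exact lintegral_mono hslice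
    _ ≤ ENNReal.ofReal (5 / 4 * (3 * δ) * (1 + log (1 / (3 * δ)))) :=
        setLIntegral_Ico_min_one_div_abs_sin_le (by positivity) (by linarith)
    _ ≤ ENNReal.ofReal (8 * δ * |log δ|) :=
        ENNReal.ofReal_le_ofReal (by linarith [mul_one_add_log_one_div_three_mul_le hδ hδ3])
end
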